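/- arXiv:1912.03342 — 4 statements merged into one kernel-verified Lean document; each statement's English description precedes it below -/
import Mathlib

section
/- Let κ be a regular uncountable cardinal, let ⟨C_β : β < κ⟩ be a C-sequence over κ, let χ be a cardinal with χ < sup(reg(κ)), let A, Δ', Γ ∈ [κ]^κ, and let b' : A → [Γ]^{≤χ} be a function satisfying Δ' ∩ α ⊆ ⋃_{β ∈ b'(α)} C_β for all α ∈ A. Then for every stationary Σ ⊆ E^κ_{>χ} there exist Δ₀, Δ₁ ∈ [κ]^κ and a progressive function b : κ → [Γ]^{≤χ} such that: Δ₀ ⊆ Δ'; acc⁺(Δ₁) ∩ E^κ_{>χ} ⊆ Δ₁; Δ₀ ∩ α ⊆ ⋃_{β ∈ b(α)} C_β for all α < κ; Δ₁ ∩ α ⊆ ⋃_{β ∈ b(α)} acc(C_β) for all α < κ; and the set {α ∈ Σ : for all β ∈ b(α), sup(C_β ∩ α) = α} is stationary in κ. -/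
noncomputable section

open Set

namespace CSeq

/-- `#s = c`, phrased with a universe lift (sets of ordinals live in `Type 1`). -/
def MkEq {α : Type 1} (s : Set α) (c : Cardinal.{0}) : Prop :=
  Cardinal.mk s = Cardinal.lift.{1} c

def MkLe {α : Type 1} (s : Set α) (c : Cardinal.{0}) : Prop :=
  Cardinal.mk s ≤ Cardinal.lift.{1} c

def MkLt {α : Type 1} (s : Set α) (c : Cardinal.{0}) : Prop :=
  Cardinal.mk s < Cardinal.lift.{1} c

/-- The strict supremum `ssup(a)` of a set of ordinals. -/
def ssup (a : Set Ordinal.{0}) : Ordinal.{0} := sSup ((· + 1) '' a)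

/-- `acc⁺(a) = {α < ssup a | sup (a ∩ α) = α > 0}`. -/
def accPlus (a : Set Ordinal.{0}) : Set Ordinal.{0} :=
  {α | α < ssup a ∧ 0 < α ∧ sSup (a ∩ Iio α) = α}

/-- `acc(a) = a ∩ acc⁺(a)`. -/
def acc (a : Set Ordinal.{0}) : Set Ordinal.{0} := a ∩ accPlus a

/-- A set of ordinals is closed below `β`. -/
def IsClosedIn (C : Set Ordinal.{0}) (β : Ordinal.{0}) : Prop :=
  ∀ α, α < β → 0 < α → sSup (C ∩ Iio α) = α → α ∈ C

/-- A club (closed and unbounded set) in `β`. -/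
def IsClubIn (C : Set Ordinal.{0}) (β : Ordinal.{0}) : Prop :=
  C ⊆ Iio β ∧ (∀ α < β, ∃ γ ∈ C, α ≤ γ) ∧ IsClosedIn C β

/-- A stationary subset of `β`: one meeting every club in `β`. -/
def IsStationaryIn (S : Set Ordinal.{0}) (β : Ordinal.{0}) : Prop :=
  ∀ C, IsClubIn C β → (S ∩ C).Nonempty

/-- A C-sequence over a set `Γ` of ordinals. -/
def IsCSeqOn (Γ : Set Ordinal.{0}) (C : Ordinal.{0} → Set Ordinal.{0}) : Prop :=
  ∀ β ∈ Γ, C β ⊆ Iio β ∧ IsClosedIn (C β) β ∧ sSup (C β) = sSup (Iio β)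

/-- A C-sequence over `κ`. -/
def IsCSeq (κ : Ordinal.{0}) (C : Ordinal.{0} → Set Ordinal.{0}) : Prop :=
  IsCSeqOn (Iio κ) C

/-- The covering relation underlying the C-sequence number: there are `Δ ∈ [κ]^κ` and
`b : κ → [Γ]^χ` with `Δ ∩ α ⊆ ⋃_{β ∈ b α} C β` for all `α < κ`. -/
def CSeqCovers (κ : Cardinal.{0}) (Γ : Set Ordinal.{0})
    (C : Ordinal.{0} → Set Ordinal.{0}) (χ : Cardinal.{0}) : Prop :=
  ∃ (Δ : Set Ordinal.{0}) (b : Ordinal.{0} → Set Ordinal.{0}),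
    Δ ⊆ Iio κ.ord ∧ MkEq Δ κ ∧
    (∀ α < κ.ord, b α ⊆ Γ ∧ MkEq (b α) χ) ∧
    ∀ α < κ.ord, Δ ∩ Iio α ⊆ ⋃ β ∈ b α, C β

/-- `χ(vec C)` for a C-sequence over `Γ ⊆ κ`. -/
def chiOfOn (κ : Cardinal.{0}) (Γ : Set Ordinal.{0})
    (C : Ordinal.{0} → Set Ordinal.{0}) : Cardinal.{0} :=
  sInf {χ : Cardinal.{0} | χ ≤ κ ∧ CSeqCovers κ Γ C χ}

/-- `χ(vec C)` for a C-sequence over `κ`. -/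
def chiOf (κ : Cardinal.{0}) (C : Ordinal.{0} → Set Ordinal.{0}) : Cardinal.{0} :=
  chiOfOn κ (Iio κ.ord) C

/-- The C-sequence number `χ(κ)`. -/
def chiNum (κ : Cardinal.{0}) : Cardinal.{0} :=
  sInf {χ : Cardinal.{0} | χ ≤ κ ∧ ∀ C, IsCSeq κ.ord C → CSeqCovers κ (Iio κ.ord) C χ}

/-- The C-sequence spectrum of `κ`: the infinite values of `χ(vec C)`. -/
def spec (κ : Cardinal.{0}) : Set Cardinal.{0} :=
  {χ | Cardinal.aleph0 ≤ χ ∧ ∃ C, IsCSeq κ.ord C ∧ chiOf κ C = χ}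

/-- `sup (reg κ)`, the supremum of the infinite regular cardinals below `κ`. -/
def supReg (κ : Cardinal.{0}) : Cardinal.{0} :=
  sSup {ν : Cardinal.{0} | ν.IsRegular ∧ ν < κ}

/-- `acc(κ)`: the set of nonzero limit ordinals below `κ`. -/
def accOrd (κ : Ordinal.{0}) : Set Ordinal.{0} := {β | β < κ ∧ Order.IsSuccLimit β}

/-- `Tr(S)`: the set of `β < κ` of uncountable cofinality in which `S` reflects. -/
def TrSet (κ : Ordinal.{0}) (S : Set Ordinal.{0}) : Set Ordinal.{0} :=
  {β | β < κ ∧ Cardinal.aleph0 < β.cof ∧ IsStationaryIn (S ∩ Iio β) β}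

/-- The order type of a set of ordinals (as an ordinal one universe up). -/
def otp (s : Set Ordinal.{0}) : Ordinal.{1} :=
  Ordinal.type (Subrel ((· < ·) : Ordinal.{0} → Ordinal.{0} → Prop) (· ∈ s))

/-- `D^c_{≤ i}(β) = {α < β | c(α, β) ≤ i}`. -/
def DleI (c : Ordinal.{0} → Ordinal.{0} → Ordinal.{0}) (i β : Ordinal.{0}) :
    Set Ordinal.{0} :=
  {α | α < β ∧ c α β ≤ i}

/-- The coloring `c` takes pairs from `κ` to colors `< θ`. -/
def ColoringInto (κ θ : Ordinal.{0}) (c : Ordinal.{0} → Ordinal.{0} → Ordinal.{0}) : Prop :=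
  ∀ α β, α < β → β < κ → c α β < θ

/-- `S`-closedness of a coloring. -/
def IsClosedColoringOn (S : Set Ordinal.{0}) (κ θ : Ordinal.{0})
    (c : Ordinal.{0} → Ordinal.{0} → Ordinal.{0}) : Prop :=
  ∀ β < κ, ∀ i < θ, ∀ α ∈ S, α < β → 0 < α →
    sSup (DleI c i β ∩ Iio α) = α → α ∈ DleI c i β

/-- Closedness of a coloring. -/
def IsClosedColoring (κ θ : Ordinal.{0})
    (c : Ordinal.{0} → Ordinal.{0} → Ordinal.{0}) : Prop :=
  ∀ β < κ, ∀ i < θ, ∀ α, α < β → 0 < α →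
    sSup (DleI c i β ∩ Iio α) = α → α ∈ DleI c i β

/-- `c` witnesses `U(κ, μ, θ, χ)`. -/
def WitnessU (κ μ θ χ : Cardinal.{0})
    (c : Ordinal.{0} → Ordinal.{0} → Ordinal.{0}) : Prop :=
  ∀ χ' : Cardinal.{0}, χ' < χ →
    ∀ 𝒜 : Set (Set Ordinal.{0}),
      (∀ a ∈ 𝒜, a ⊆ Iio κ.ord ∧ MkEq a χ') → MkEq 𝒜 κ → 𝒜.Pairwise Disjoint →
    ∀ i, i < θ.ord →
      ∃ ℬ ⊆ 𝒜, MkEq ℬ μ ∧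
        ∀ a ∈ ℬ, ∀ b ∈ ℬ, (∀ α ∈ a, ∀ β ∈ b, α < β) →
          ∀ α ∈ a, ∀ β ∈ b, i < c α β

/-- An ultrafilter over a set `X` of ordinals, presented as a family of subsets of `X`. -/
structure IsUltrafilterOn (X : Set Ordinal.{0}) (U : Set (Set Ordinal.{0})) : Prop where
  mem_subset : ∀ A ∈ U, A ⊆ X
  univ_mem : X ∈ U
  empty_notMem : ∅ ∉ U
  mem_of_superset : ∀ A ∈ U, ∀ B, B ⊆ X → A ⊆ B → B ∈ U
  inter_mem : ∀ A ∈ U, ∀ B ∈ U, A ∩ B ∈ U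
  mem_or_compl_mem : ∀ A, A ⊆ X → A ∈ U ∨ X \ A ∈ U

/-- `δ`-completeness of an ultrafilter over `X`. -/
def IsComplete (δ : Cardinal.{0}) (X : Set Ordinal.{0})
    (U : Set (Set Ordinal.{0})) : Prop :=
  ∀ s : Set (Set Ordinal.{0}), s ⊆ U → MkLt s δ → X ∩ ⋂₀ s ∈ U

/-- Uniformity of an ultrafilter over `X`: all members have full cardinality. -/
def IsUniform (X : Set Ordinal.{0}) (U : Set (Set Ordinal.{0})) : Prop :=
  ∀ A ∈ U, Cardinal.mk A = Cardinal.mk X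

/-- Weak normality of an ultrafilter over a set of nonzero ordinals below `κ`. -/
def IsWeaklyNormal (κ : Ordinal.{0}) (X : Set Ordinal.{0})
    (U : Set (Set Ordinal.{0})) : Prop :=
  ∀ X' ∈ U, ∀ g : Ordinal.{0} → Ordinal.{0}, (∀ β ∈ X', g β < β) →
    ∃ γ < κ, {β ∈ X' | g β < γ} ∈ U

/-- A `□(κ,<ω)`-sequence. -/
def IsSquareSeqLtOmega (κ : Ordinal.{0})
    (𝒞 : Ordinal.{0} → Set (Set Ordinal.{0})) : Prop :=
  (∀ α, α < κ → Order.IsSuccLimit α →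
      (𝒞 α).Finite ∧ (𝒞 α).Nonempty ∧ ∀ C ∈ 𝒞 α, IsClubIn C α) ∧
  (∀ α, α < κ → Order.IsSuccLimit α → ∀ C ∈ 𝒞 α, ∀ β ∈ acc C, C ∩ Iio β ∈ 𝒞 β) ∧
  ¬ ∃ D : Set Ordinal.{0}, IsClubIn D κ ∧ ∀ α ∈ acc D, D ∩ Iio α ∈ 𝒞 α

/-- A weakly inaccessible cardinal: a regular limit cardinal. -/
def IsWInaccessible (c : Cardinal.{0}) : Prop :=
  c.IsRegular ∧ Order.IsSuccLimit c

/-- The Mahlo hierarchy (finite levels): `0`-Mahlo means weakly inaccessible, and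
`(n+1)`-Mahlo means regular with stationarily many `n`-Mahlo cardinals below. -/
def IsNMahlo : ℕ → Cardinal.{0} → Prop
  | 0 => fun c => IsWInaccessible c
  | (n + 1) => fun c => c.IsRegular ∧
      IsStationaryIn {α : Ordinal.{0} | ∃ μ : Cardinal.{0}, μ.ord = α ∧ IsNMahlo n μ} c.ord

/-- A set of ordinals is bounded below `α`. -/
def BoundedIn (s : Set Ordinal.{0}) (α : Ordinal.{0}) : Prop :=
  s = ∅ ∨ ∃ ε < α, ∀ η ∈ s, η ≤ ε

/-- The covering property for a coloring `c : [κ]² → θ`. -/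
def HasCoveringProperty (κ θ : Cardinal.{0})
    (c : Ordinal.{0} → Ordinal.{0} → Ordinal.{0}) : Prop :=
  ∀ α < κ.ord, ∃ f : Ordinal.{0} → Ordinal.{0},
    Set.InjOn f (Iio θ.ord) ∧
    (∀ i < θ.ord, α < f i ∧ f i < κ.ord ∧ Order.IsSuccLimit (f i) ∧ (f i).cof ≠ θ) ∧
    BoundedIn (Iio α \ ⋃ i ∈ Iio θ.ord, DleI c i (f i)) α


/-!
For `σ ∈ Σ` pick `a(σ) ∈ A` above `σ`. Since `|b'(a(σ))| ≤ χ < cf σ`, the sets `C β ∩ σ`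
(`β ∈ b'(a(σ))`) that are bounded in `σ` are all bounded by some `g(σ) < σ`, and `Δ' ∩ (g(σ), σ)` is
covered by the `C β` that are cofinal in `σ`. Fodor's lemma bounds `g` by a single `ε` on a
stationary set `T`, which we shrink to accumulation points of `Δ₀ = Δ' \ (ε + 1)`. Then
`b(α)` collects the cofinal `β` at the least `σ ∈ T` above `α`; it is progressive because a
`C β ⊆ β` cofinal in `σ` forces `σ ≤ β`.

For `Δ₁ = acc⁺(Δ₀) ∩ E^κ_{>χ}` and `δ ∈ Δ₁ ∩ α` the same counting at `δ` gives a `β ∈ b(α)` with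
`C β` cofinal in `δ`; as `δ < α ≤ β` and `C β` is closed, `δ ∈ acc(C β)`.
-/
section Ordinals

open Cardinal

variable {s t : Set Ordinal.{0}} {o α γ : Ordinal.{0}}

def IsUnboundedIn (s : Set Ordinal.{0}) (o : Ordinal.{0}) : Prop :=
  ∀ η < o, ∃ γ ∈ s, η < γ ∧ γ < o

lemma IsUnboundedIn.mono (h : IsUnboundedIn s o) (hst : s ⊆ t) : IsUnboundedIn t o :=
  fun η hη => (h η hη).imp fun _ ⟨hγ, hηγ⟩ => ⟨hst hγ, hηγ⟩

lemma sSup_inter_Iio_eq_iff : sSup (s ∩ Iio o) = o ↔ IsUnboundedIn s o := by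
  constructor
  · intro h η hη
    have hne : (s ∩ Iio o).Nonempty := by
      by_contra hne
      rw [not_nonempty_iff_eq_empty.1 hne, csSup_empty] at h
      simp [← h] at hη
    obtain ⟨γ, hγ, hηγ⟩ := exists_lt_of_lt_csSup hne (h.symm ▸ hη)
    exact ⟨γ, hγ.1, hηγ, hγ.2⟩
  · intro h
    refine le_antisymm (csSup_le' fun x hx => hx.2.le) (le_of_forall_lt fun η hη => ?_)
    obtain ⟨γ, hγ, hηγ, hγo⟩ := h η hη
    exact hηγ.trans_le (le_csSup (bddAbove_Iio.mono inter_subset_right) ⟨hγ, hγo⟩)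

lemma sSup_lt_of_mk_lt_cof (hs : s ⊆ Iio o) (h : #s < lift.{1} o.cof) : sSup s < o :=
  Ordinal.sSup_lt_of_lt_cof (by rwa [← Ordinal.lift_cof]) hs

lemma mk_lt_of_subset_Iio {κ : Cardinal.{0}} (hs : s ⊆ Iio o) (ho : o < κ.ord) :
    #s < lift.{1} κ :=
  (mk_le_mk_of_subset hs).trans_lt <| by
    rw [mk_Iio_ordinal, lift_lt]; exact lt_ord.1 ho

lemma isUnboundedIn_of_mkEq {κ : Cardinal.{0}} (hκ : ℵ₀ ≤ κ) (hs : s ⊆ Iio κ.ord)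
    (h : MkEq s κ) : IsUnboundedIn s κ.ord := by
  intro η hη
  by_contra! hbdd
  have hsη : s ⊆ Iio (η + 1) := fun γ hγ =>
    Order.lt_add_one_iff.2 (not_lt.1 fun hηγ => (hbdd γ hγ hηγ).not_gt (hs hγ))
  exact (mk_lt_of_subset_Iio hsη ((isSuccLimit_ord hκ).succ_lt hη)).ne h

lemma IsUnboundedIn.mkEq {κ : Cardinal.{0}} (hκ : κ.IsRegular) (hs : s ⊆ Iio κ.ord)
    (h : IsUnboundedIn s κ.ord) : MkEq s κ := by
  refine le_antisymm ((mk_le_mk_of_subset hs).trans (by simp)) (not_lt.1 fun hlt => ?_)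
  have hsup : sSup s < κ.ord := sSup_lt_of_mk_lt_cof hs (by rwa [hκ.cof_ord])
  obtain ⟨γ, hγ, hsupγ, -⟩ := h _ hsup
  exact hsupγ.not_ge (le_csSup (bddAbove_Iio.mono hs) hγ)

lemma IsUnboundedIn.inter_Ioi {ε : Ordinal.{0}} (h : IsUnboundedIn s o)
    (hε : ε < o) : IsUnboundedIn (s ∩ Ioi ε) o := fun η hη => by
  obtain ⟨δ, hδ, hηδ, hδo⟩ := h (max η ε) (max_lt hη hε)
  exact ⟨δ, ⟨hδ, (le_max_right _ _).trans_lt hηδ⟩, (le_max_left _ _).trans_lt hηδ, hδo⟩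

def nextIn (s : Set Ordinal.{0}) (γ : Ordinal.{0}) : Ordinal.{0} := sInf (s ∩ Ici γ)

lemma IsUnboundedIn.nextIn_mem (h : IsUnboundedIn s o) (hγ : γ < o) :
    nextIn s γ ∈ s ∧ γ ≤ nextIn s γ ∧ nextIn s γ < o := by
  obtain ⟨x, hx, hγx, hxo⟩ := h γ hγ
  have hmem : nextIn s γ ∈ s ∩ Ici γ :=
    csInf_mem (show (s ∩ Ici γ).Nonempty from ⟨x, hx, mem_Ici.2 hγx.le⟩)
  exact ⟨hmem.1, hmem.2, (csInf_le' (s := s ∩ Ici γ) ⟨hx, mem_Ici.2 hγx.le⟩).trans_lt hxo⟩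

lemma nextIn_eq_self (hγ : γ ∈ s) : nextIn s γ = γ :=
  le_antisymm (csInf_le' ⟨hγ, self_mem_Ici⟩) (le_csInf ⟨γ, hγ, self_mem_Ici⟩ fun _ hx => hx.2)

lemma exists_closurePoint {κ : Cardinal.{0}} (hκ : κ.IsRegular) (hunc : ℵ₀ < κ)
    {F : Ordinal.{0} → Ordinal.{0}} (hF : ∀ γ < κ.ord, F γ < κ.ord) {η : Ordinal.{0}}
    (hη : η < κ.ord) : ∃ α, η < α ∧ α < κ.ord ∧ ∀ ζ < α, F ζ < α := by
  have hlim := isSuccLimit_ord hκ.aleph0_le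
  set G : Ordinal.{0} → Ordinal.{0} := fun γ => sSup ((fun ζ => F ζ + 1) '' Iio γ)
  have hG : ∀ γ < κ.ord, G γ < κ.ord := fun γ hγ => by
    refine sSup_lt_of_mk_lt_cof ?_ ?_
    · rintro _ ⟨ζ, hζ, rfl⟩; exact hlim.succ_lt (hF ζ (hζ.trans hγ))
    · rw [hκ.cof_ord]; exact mk_image_le.trans_lt (mk_lt_of_subset_Iio subset_rfl hγ)
  refine ⟨Ordinal.nfp G (η + 1), (lt_add_one _).trans_le (Ordinal.le_nfp _ _),
    nfp_lt_ord_of_isRegular hκ hunc.ne' hG (hlim.succ_lt hη), fun ζ hζ => ?_⟩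
  obtain ⟨n, hn⟩ := Ordinal.lt_nfp_iff.1 hζ
  calc F ζ < F ζ + 1 := lt_add_one _
    _ ≤ G (G^[n] (η + 1)) := le_csSup (Ordinal.bddAbove_image bddAbove_Iio _) ⟨ζ, hn, rfl⟩
    _ ≤ Ordinal.nfp G (η + 1) := by
      simpa only [Function.iterate_succ_apply'] using Ordinal.iterate_le_nfp G _ (n + 1)

end Ordinals

section Clubs

open Cardinal

variable {κ : Cardinal.{0}} {s U S T : Set Ordinal.{0}} {o α η u : Ordinal.{0}}

lemma exists_le_of_lt_ssup (h : α < ssup s) : ∃ u ∈ s, α ≤ u := by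
  have hne : ((· + 1) '' s).Nonempty := by
    by_contra hne
    rw [ssup, not_nonempty_iff_eq_empty.1 hne, csSup_empty] at h
    simp at h
  obtain ⟨_, ⟨u, hu, rfl⟩, hαu⟩ := exists_lt_of_lt_csSup hne h
  exact ⟨u, hu, Order.lt_add_one_iff.1 hαu⟩

lemma lt_ssup_of_le_of_mem (hs : BddAbove s) (hu : u ∈ s) (hαu : α ≤ u) : α < ssup s :=
  (Order.lt_add_one_iff.2 hαu).trans_le (le_csSup (Ordinal.bddAbove_image hs _) ⟨u, hu, rfl⟩)

lemma mem_accPlus_iff (hs : BddAbove s) :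
    α ∈ accPlus s ↔ (∃ u ∈ s, α ≤ u) ∧ 0 < α ∧ IsUnboundedIn s α := by
  change α < ssup s ∧ 0 < α ∧ sSup (s ∩ Iio α) = α ↔ _
  rw [sSup_inter_Iio_eq_iff]
  exact and_congr_left' ⟨exists_le_of_lt_ssup, fun ⟨u, hu, hαu⟩ => lt_ssup_of_le_of_mem hs hu hαu⟩

lemma IsUnboundedIn.of_accPlus (h : IsUnboundedIn (accPlus s) α) : IsUnboundedIn s α := by
  intro η hη
  obtain ⟨γ, hγ, hηγ, hγα⟩ := h η hη
  obtain ⟨x, hx, hηx, hxγ⟩ := sSup_inter_Iio_eq_iff.1 hγ.2.2 η hηγ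
  exact ⟨x, hx, hηx, hxγ.trans hγα⟩

lemma accPlus_subset_accPlus (hU : BddAbove U) (hs : s ⊆ accPlus U) :
    accPlus s ⊆ accPlus U := by
  intro α hα
  obtain ⟨x, hx, hαx⟩ := exists_le_of_lt_ssup hα.1
  obtain ⟨u, hu, hxu⟩ := exists_le_of_lt_ssup (hs hx).1
  exact (mem_accPlus_iff hU).2 ⟨⟨u, hu, hαx.trans hxu⟩, hα.2.1,
    ((sSup_inter_Iio_eq_iff.1 hα.2.2).mono hs).of_accPlus⟩

lemma IsClosedIn.mem_of_isUnboundedIn (h : IsClosedIn s o) (hαo : α < o) (h0 : 0 < α)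
    (hu : IsUnboundedIn s α) : α ∈ s :=
  h α hαo h0 (sSup_inter_Iio_eq_iff.2 hu)

lemma IsClubIn.isUnboundedIn (hlim : Order.IsSuccLimit o) (h : IsClubIn s o) :
    IsUnboundedIn s o := fun η hη =>
  let ⟨γ, hγ, hηγ⟩ := h.2.1 (η + 1) (hlim.succ_lt hη)
  ⟨γ, hγ, (lt_add_one _).trans_le hηγ, h.1 hγ⟩

lemma isClubIn_accPlus (hκ : κ.IsRegular) (hunc : ℵ₀ < κ) (hU : U ⊆ Iio κ.ord)
    (hu : IsUnboundedIn U κ.ord) : IsClubIn (accPlus U) κ.ord := by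
  have hbdd : BddAbove U := bddAbove_Iio.mono hU
  have hlim := isSuccLimit_ord hκ.aleph0_le
  have hnext : ∀ γ < κ.ord, _ := fun γ hγ => hu.nextIn_mem (hlim.succ_lt hγ)
  refine ⟨fun α hα => ?_, fun η hη => ?_, fun α hα h0 hsup => ?_⟩
  · obtain ⟨u, hu, hαu⟩ := exists_le_of_lt_ssup hα.1
    exact hαu.trans_lt (hU hu)
  · obtain ⟨α, hηα, hακ, hclosed⟩ :=
      exists_closurePoint hκ hunc (fun γ hγ => (hnext γ hγ).2.2) hη
    obtain ⟨u, hu, hαu, -⟩ := hu α hακ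
    refine ⟨α, (mem_accPlus_iff hbdd).2 ⟨⟨u, hu, hαu.le⟩, pos_of_gt hηα, fun ζ hζ => ?_⟩, hηα.le⟩
    exact ⟨_, (hnext ζ (hζ.trans hακ)).1,
      (lt_add_one _).trans_le (hnext ζ (hζ.trans hακ)).2.1, hclosed ζ hζ⟩
  · obtain ⟨u, hu, hαu, -⟩ := hu α hα
    exact (mem_accPlus_iff hbdd).2
      ⟨⟨u, hu, hαu.le⟩, h0, (sSup_inter_Iio_eq_iff.1 hsup).of_accPlus⟩

def diagInter (o : Ordinal.{0}) (D : Ordinal.{0} → Set Ordinal.{0}) : Set Ordinal.{0} :=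
  {α | α < o ∧ ∀ ε < α, α ∈ D ε}

lemma isClubIn_diagInter (hκ : κ.IsRegular) (hunc : ℵ₀ < κ) {D : Ordinal.{0} → Set Ordinal.{0}}
    (hD : ∀ ε < κ.ord, IsClubIn (D ε) κ.ord) : IsClubIn (diagInter κ.ord D) κ.ord := by
  have hlim := isSuccLimit_ord hκ.aleph0_le
  have hnext : ∀ ε γ, ε ≤ γ → γ < κ.ord → _ := fun ε γ hεγ hγ =>
    ((hD ε (hεγ.trans_lt hγ)).isUnboundedIn hlim).nextIn_mem (hlim.succ_lt hγ)
  refine ⟨fun α hα => hα.1, fun η hη => ?_, fun α hα h0 hsup => ⟨hα, fun ε hε => ?_⟩⟩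
  · set F : Ordinal.{0} → Ordinal.{0} := fun γ => sSup ((fun ε => nextIn (D ε) (γ + 1)) '' Iic γ)
    have hF : ∀ γ < κ.ord, F γ < κ.ord := fun γ hγ => by
      refine sSup_lt_of_mk_lt_cof ?_ ?_
      · rintro _ ⟨ε, hε, rfl⟩; exact (hnext ε γ hε hγ).2.2
      · rw [hκ.cof_ord]
        exact mk_image_le.trans_lt
          (mk_lt_of_subset_Iio (fun _ hx => mem_Iio.2 (Order.lt_succ_iff.2 hx)) (hlim.succ_lt hγ))
    obtain ⟨α, hηα, hακ, hclosed⟩ := exists_closurePoint hκ hunc hF hη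
    refine ⟨α, ⟨hακ, fun ε hε => (hD ε (hε.trans hακ)).2.2.mem_of_isUnboundedIn hακ
      (pos_of_gt hηα) fun ζ hζ => ?_⟩, hηα.le⟩
    have hγ : max ε ζ < α := max_lt hε hζ
    obtain ⟨hmem, hle, -⟩ := hnext ε (max ε ζ) (le_max_left _ _) (hγ.trans hακ)
    have hleF : nextIn (D ε) (max ε ζ + 1) ≤ F (max ε ζ) :=
      le_csSup (Ordinal.bddAbove_image bddAbove_Iic _) ⟨ε, mem_Iic.2 (le_max_left _ _), rfl⟩
    exact ⟨_, hmem, (Order.lt_add_one_iff.2 (le_max_right ε ζ)).trans_le hle,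
      hleF.trans_lt (hclosed _ hγ)⟩
  · refine (hD ε (hε.trans hα)).2.2.mem_of_isUnboundedIn hα h0 fun ζ hζ => ?_
    obtain ⟨γ, hγ, hζεγ, hγα⟩ := sSup_inter_Iio_eq_iff.1 hsup (max ζ ε) (max_lt hζ hε)
    exact ⟨γ, hγ.2 ε ((le_max_right _ _).trans_lt hζεγ), (le_max_left _ _).trans_lt hζεγ, hγα⟩

lemma IsClubIn.inter (hκ : κ.IsRegular) (hunc : ℵ₀ < κ) {C D : Set Ordinal.{0}}
    (hC : IsClubIn C κ.ord) (hD : IsClubIn D κ.ord) : IsClubIn (C ∩ D) κ.ord := by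
  have hdiag := isClubIn_diagInter hκ hunc (D := fun ε => if ε = 0 then C else D)
    fun ε _ => by split_ifs <;> assumption
  have h1κ : 1 < κ.ord := Cardinal.lt_ord.2 (by simpa using one_lt_aleph0.trans_le hκ.aleph0_le)
  refine ⟨fun x hx => hC.1 hx.1, fun η hη => ?_, fun α hα h0 hsup => ?_⟩
  · obtain ⟨γ, hγ, hηγ, -⟩ :=
      hdiag.isUnboundedIn (isSuccLimit_ord hκ.aleph0_le) (max η 1) (max_lt hη h1κ)
    have h1γ : 1 < γ := (le_max_right _ _).trans_lt hηγ
    exact ⟨γ, ⟨by simpa using hγ.2 0 (zero_lt_one.trans h1γ), by simpa using hγ.2 1 h1γ⟩,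
      ((le_max_left _ _).trans_lt hηγ).le⟩
  · have hu := sSup_inter_Iio_eq_iff.1 hsup
    exact ⟨hC.2.2.mem_of_isUnboundedIn hα h0 (hu.mono inter_subset_left),
      hD.2.2.mem_of_isUnboundedIn hα h0 (hu.mono inter_subset_right)⟩

lemma isClubIn_Ioo (hlim : Order.IsSuccLimit o) (hη : η < o) : IsClubIn (Ioo η o) o := by
  refine ⟨fun x hx => hx.2, fun α hα => ⟨max α (η + 1), ⟨?_, ?_⟩, le_max_left _ _⟩,
    fun α hα h0 hsup => ?_⟩
  · exact (lt_add_one _).trans_le (le_max_right _ _)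
  · exact max_lt hα (hlim.succ_lt hη)
  · obtain ⟨γ, hγ, -, hγα⟩ := sSup_inter_Iio_eq_iff.1 hsup 0 h0
    exact ⟨hγ.1.trans hγα, hα⟩

lemma IsStationaryIn.mono (hS : IsStationaryIn S o) (h : S ⊆ T) : IsStationaryIn T o :=
  fun C hC => (hS C hC).mono (inter_subset_inter_left C h)

lemma IsStationaryIn.isUnboundedIn (hlim : Order.IsSuccLimit o) (hS : IsStationaryIn S o) :
    IsUnboundedIn S o := fun _ hη =>
  let ⟨γ, hγS, hγ⟩ := hS _ (isClubIn_Ioo hlim hη)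
  ⟨γ, hγS, hγ⟩

lemma IsStationaryIn.inter_isClubIn (hκ : κ.IsRegular) (hunc : ℵ₀ < κ)
    (hS : IsStationaryIn S κ.ord) {D : Set Ordinal.{0}} (hD : IsClubIn D κ.ord) :
    IsStationaryIn (S ∩ D) κ.ord := fun C hC => by
  simpa only [inter_assoc] using hS _ (hD.inter hκ hunc hC)

/-- Fodor's pressing-down lemma. -/
lemma IsStationaryIn.exists_isStationaryIn_le (hκ : κ.IsRegular) (hunc : ℵ₀ < κ)
    (hS : IsStationaryIn S κ.ord) (hSκ : S ⊆ Iio κ.ord) {g : Ordinal.{0} → Ordinal.{0}}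
    (hg : ∀ α ∈ S, g α < α) : ∃ ε < κ.ord, IsStationaryIn {α ∈ S | g α ≤ ε} κ.ord := by
  by_contra! h
  have hclub : ∀ ε, ∃ D, ε < κ.ord → IsClubIn D κ.ord ∧ ∀ α ∈ D, α ∈ S → ε < g α := by
    intro ε
    by_cases hε : ε < κ.ord
    · have := h ε hε
      simp only [IsStationaryIn, not_forall, not_nonempty_iff_eq_empty] at this
      obtain ⟨D, hD, hdisj⟩ := this
      exact ⟨D, fun _ => ⟨hD, fun α hαD hαS => not_le.1 fun hle =>
        (hdisj.subset ⟨⟨hαS, hle⟩, hαD⟩ : α ∈ (∅ : Set Ordinal.{0}))⟩⟩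
    · exact ⟨∅, fun h => absurd h hε⟩
  choose D hD using hclub
  obtain ⟨α, hαS, hαD⟩ := hS _ (isClubIn_diagInter hκ hunc fun ε hε => (hD ε hε).1)
  have hgα := hg α hαS
  exact (hD _ (hgα.trans (hSκ hαS))).2 α (hαD.2 _ hgα) hαS |>.false

end Clubs

section Covering

open Cardinal

variable {C : Ordinal.{0} → Set Ordinal.{0}} {b Γ Δ : Set Ordinal.{0}} {σ δ β : Ordinal.{0}}

def goodPart (C : Ordinal.{0} → Set Ordinal.{0}) (b : Set Ordinal.{0}) (σ : Ordinal.{0}) :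
    Set Ordinal.{0} :=
  {β ∈ b | sSup (C β ∩ Iio σ) = σ}

def badBound (C : Ordinal.{0} → Set Ordinal.{0}) (b : Set Ordinal.{0}) (σ : Ordinal.{0}) :
    Ordinal.{0} :=
  sSup ((fun β => sSup (C β ∩ Iio σ)) '' (b \ goodPart C b σ))

lemma badBound_lt (hb : #b < lift.{1} σ.cof) : badBound C b σ < σ := by
  refine sSup_lt_of_mk_lt_cof ?_
    (mk_image_le.trans_lt ((mk_le_mk_of_subset sdiff_subset).trans_lt hb))
  rintro _ ⟨β, hβ, rfl⟩
  exact (csSup_le' fun x hx => hx.2.le).lt_of_ne fun h => hβ.2 ⟨hβ.1, h⟩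

lemma mem_goodPart_of_badBound_lt (hβ : β ∈ b) (hδ : δ ∈ C β) (hδσ : δ < σ)
    (hbad : badBound C b σ < δ) : β ∈ goodPart C b σ := by
  by_contra hgood
  have hbdd : BddAbove ((fun β => sSup (C β ∩ Iio σ)) '' (b \ goodPart C b σ)) :=
    ⟨σ, by rintro _ ⟨β, -, rfl⟩; exact csSup_le' fun x hx => hx.2.le⟩
  have hle : sSup (C β ∩ Iio σ) ≤ badBound C b σ := le_csSup hbdd ⟨β, ⟨hβ, hgood⟩, rfl⟩
  exact hbad.not_ge ((le_csSup (bddAbove_Iio.mono inter_subset_right) ⟨hδ, hδσ⟩).trans hle)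

lemma inter_Ioo_badBound_subset (hcov : Δ ∩ Iio σ ⊆ ⋃ β ∈ b, C β) :
    Δ ∩ Ioo (badBound C b σ) σ ⊆ ⋃ β ∈ goodPart C b σ, C β := by
  rintro δ ⟨hδΔ, hbad, hδσ⟩
  obtain ⟨β, hβ, hδβ⟩ := mem_iUnion₂.1 (hcov ⟨hδΔ, hδσ⟩)
  exact mem_biUnion (mem_goodPart_of_badBound_lt hβ hδβ hδσ hbad) hδβ

lemma le_of_mem_goodPart (hCβ : C β ⊆ Iio β) (hβ : β ∈ goodPart C b σ) : σ ≤ β :=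
  hβ.2 ▸ csSup_le' fun _ hx => (hCβ hx.1).le

lemma mem_acc_of_mem_goodPart (hCβ : C β ⊆ Iio β) (hclosed : IsClosedIn (C β) β)
    (hσβ : σ < β) (hσ0 : 0 < σ) (hβ : β ∈ goodPart C b σ) : σ ∈ acc (C β) := by
  have hσC : σ ∈ C β := hclosed σ hσβ hσ0 hβ.2
  exact ⟨hσC, lt_ssup_of_le_of_mem (bddAbove_Iio.mono hCβ) hσC le_rfl, hσ0, hβ.2⟩

lemma mem_biUnion_acc_of_mem_accPlus (hC : IsCSeqOn Γ C) (hbΓ : b ⊆ Γ)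
    (hb : #b < lift.{1} δ.cof) (hprog : ∀ β ∈ b, δ < β) (hδ : δ ∈ accPlus Δ)
    (hcov : Δ ∩ Iio δ ⊆ ⋃ β ∈ b, C β) : δ ∈ ⋃ β ∈ b, acc (C β) := by
  obtain ⟨β', hβ', hbad, hβ'δ⟩ := sSup_inter_Iio_eq_iff.1 hδ.2.2 _ (badBound_lt hb)
  obtain ⟨β, hβ, -⟩ := mem_iUnion₂.1 (inter_Ioo_badBound_subset hcov ⟨hβ', hbad, hβ'δ⟩)
  have hCβ := hC β (hbΓ hβ.1)
  exact mem_biUnion hβ.1 (mem_acc_of_mem_goodPart hCβ.1 hCβ.2.1 (hprog β hβ.1) hδ.2.1 hβ)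

lemma exists_progressive_cover {o : Ordinal.{0}} {χ : Cardinal.{0}} {S : Set Ordinal.{0}}
    {c : Ordinal.{0} → Set Ordinal.{0}} (hC : IsCSeqOn Γ C) (hS : IsUnboundedIn S o)
    (hc : ∀ σ ∈ S, c σ ⊆ Γ ∧ MkLe (c σ) χ)
    (hcov : ∀ σ ∈ S, Δ ∩ Iio σ ⊆ ⋃ β ∈ goodPart C (c σ) σ, C β) :
    ∃ b : Ordinal.{0} → Set Ordinal.{0},
      (∀ α < o, b α ⊆ Γ ∧ MkLe (b α) χ) ∧ (∀ α < o, ∀ β ∈ b α, α ≤ β) ∧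
      (∀ α < o, Δ ∩ Iio α ⊆ ⋃ β ∈ b α, C β) ∧ ∀ σ ∈ S, b σ = goodPart C (c σ) σ := by
  refine ⟨fun α => goodPart C (c (nextIn S α)) (nextIn S α), fun α hα => ?_,
    fun α hα β hβ => ?_, fun α hα => ?_, fun σ hσ => by simp only [nextIn_eq_self hσ]⟩ <;>
  obtain ⟨hτ, hατ, -⟩ := hS.nextIn_mem hα
  · exact ⟨fun β hβ => (hc _ hτ).1 hβ.1, (mk_le_mk_of_subset fun β hβ => hβ.1).trans (hc _ hτ).2⟩
  · exact hατ.trans (le_of_mem_goodPart (hC β ((hc _ hτ).1 hβ.1)).1 hβ)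
  · exact (inter_subset_inter_right Δ (Iio_subset_Iio hατ)).trans (hcov _ hτ)

end Covering

lemma exists_isStationaryIn_goodPart_cover {κ χ : Cardinal.{0}} (hκ : κ.IsRegular)
    (hunc : Cardinal.aleph0 < κ) {C : Ordinal.{0} → Set Ordinal.{0}}
    {A Δ' Sta : Set Ordinal.{0}} {b' : Ordinal.{0} → Set Ordinal.{0}}
    (hA : IsUnboundedIn A κ.ord) (hb' : ∀ α ∈ A, MkLe (b' α) χ)
    (hcov : ∀ α ∈ A, Δ' ∩ Iio α ⊆ ⋃ β ∈ b' α, C β)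
    (hStaSub : Sta ⊆ {α | α < κ.ord ∧ χ < α.cof}) (hSta : IsStationaryIn Sta κ.ord) :
    ∃ ε < κ.ord, IsStationaryIn
      {σ ∈ Sta | Δ' ∩ Ioo ε σ ⊆ ⋃ β ∈ goodPart C (b' (nextIn A σ)) σ, C β} κ.ord := by
  have ha : ∀ σ ∈ Sta, nextIn A σ ∈ A ∧ σ ≤ nextIn A σ := fun σ hσ =>
    (hA.nextIn_mem (hStaSub hσ).1).imp_right And.left
  obtain ⟨ε, hε, hT⟩ := hSta.exists_isStationaryIn_le hκ hunc (fun σ hσ => (hStaSub hσ).1)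
    (g := fun σ => badBound C (b' (nextIn A σ)) σ) fun σ hσ =>
      badBound_lt (lt_of_le_of_lt (hb' _ (ha σ hσ).1) (Cardinal.lift_lt.2 (hStaSub hσ).2))
  refine ⟨ε, hε, hT.mono fun σ ⟨hσ, hbad⟩ => ⟨hσ, fun δ ⟨hδ, hεδ, hδσ⟩ => ?_⟩⟩
  have hcovσ : Δ' ∩ Iio σ ⊆ ⋃ β ∈ b' (nextIn A σ), C β :=
    (inter_subset_inter_right Δ' (Iio_subset_Iio (ha σ hσ).2)).trans (hcov _ (ha σ hσ).1)
  exact inter_Ioo_badBound_subset hcovσ ⟨hδ, hbad.trans_lt hεδ, hδσ⟩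

theorem statement0_general
    (κ : Cardinal.{0}) (hκreg : κ.IsRegular) (hκunc : Cardinal.aleph0 < κ)
    (C : Ordinal.{0} → Set Ordinal.{0}) (hC : IsCSeq κ.ord C)
    (χ : Cardinal.{0})
    (A Δ' Γ : Set Ordinal.{0})
    (hA : A ⊆ Iio κ.ord) (hAcard : MkEq A κ)
    (hΔ'sub : Δ' ⊆ Iio κ.ord) (hΔ'card : MkEq Δ' κ)
    (hΓsub : Γ ⊆ Iio κ.ord)
    (b' : Ordinal.{0} → Set Ordinal.{0})
    (hb' : ∀ α ∈ A, b' α ⊆ Γ ∧ MkLe (b' α) χ)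
    (hcov : ∀ α ∈ A, Δ' ∩ Iio α ⊆ ⋃ β ∈ b' α, C β)
    (Sta : Set Ordinal.{0})
    (hStaSub : Sta ⊆ {α | α < κ.ord ∧ χ < α.cof})
    (hStaStat : IsStationaryIn Sta κ.ord) :
    ∃ (Δ₀ Δ₁ : Set Ordinal.{0}) (b : Ordinal.{0} → Set Ordinal.{0}),
      Δ₀ ⊆ Iio κ.ord ∧ MkEq Δ₀ κ ∧
      Δ₁ ⊆ Iio κ.ord ∧ MkEq Δ₁ κ ∧
      (∀ α < κ.ord, b α ⊆ Γ ∧ MkLe (b α) χ) ∧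
      (∀ α < κ.ord, ∀ β ∈ b α, α ≤ β) ∧
      Δ₀ ⊆ Δ' ∧
      accPlus Δ₁ ∩ {α | α < κ.ord ∧ χ < α.cof} ⊆ Δ₁ ∧
      (∀ α < κ.ord, Δ₀ ∩ Iio α ⊆ ⋃ β ∈ b α, C β) ∧
      (∀ α < κ.ord, Δ₁ ∩ Iio α ⊆ ⋃ β ∈ b α, acc (C β)) ∧
      IsStationaryIn {α ∈ Sta | ∀ β ∈ b α, sSup (C β ∩ Iio α) = α} κ.ord := by
  have hlim := Cardinal.isSuccLimit_ord hκreg.aleph0_le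
  have hAu := isUnboundedIn_of_mkEq hκreg.aleph0_le hA hAcard
  obtain ⟨ε, hε, hT⟩ := exists_isStationaryIn_goodPart_cover hκreg hκunc hAu
    (fun α hα => (hb' α hα).2) hcov hStaSub hStaStat
  set Δ₀ := Δ' ∩ Ioi ε
  have hΔ₀κ : Δ₀ ⊆ Iio κ.ord := fun δ hδ => hΔ'sub hδ.1
  have hΔ₀u : IsUnboundedIn Δ₀ κ.ord :=
    (isUnboundedIn_of_mkEq hκreg.aleph0_le hΔ'sub hΔ'card).inter_Ioi hε
  have hS := hT.inter_isClubIn hκreg hκunc (isClubIn_accPlus hκreg hκunc hΔ₀κ hΔ₀u)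
  obtain ⟨b, hbΓ, hprog, hcov₀, hbS⟩ := exists_progressive_cover (Δ := Δ₀)
    (c := fun σ => b' (nextIn A σ)) (fun β hβ => hC β (hΓsub hβ)) (hS.isUnboundedIn hlim)
    (fun σ hσ => hb' _ (hAu.nextIn_mem (hStaSub hσ.1.1).1).1)
    fun σ hσ δ ⟨⟨hδ, hεδ⟩, hδσ⟩ => hσ.1.2 ⟨hδ, hεδ, hδσ⟩
  refine ⟨Δ₀, accPlus Δ₀ ∩ {α | α < κ.ord ∧ χ < α.cof}, b, hΔ₀κ, hΔ₀u.mkEq hκreg hΔ₀κ,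
    fun δ hδ => hδ.2.1, ?_, hbΓ, hprog, inter_subset_left,
    fun δ hδ => ⟨accPlus_subset_accPlus (bddAbove_Iio.mono hΔ₀κ) inter_subset_left hδ.1, hδ.2⟩,
    hcov₀, ?_, hS.mono fun σ hσ => ⟨hσ.1.1, fun β hβ => (hbS σ hσ ▸ hβ).2⟩⟩
  · exact IsUnboundedIn.mkEq hκreg (fun δ hδ => hδ.2.1)
      ((hS.isUnboundedIn hlim).mono fun σ hσ => ⟨hσ.2, hStaSub hσ.1.1⟩)
  · rintro α hα δ ⟨⟨hδ, hδE⟩, hδα⟩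
    exact mem_biUnion_acc_of_mem_accPlus (fun β hβ => hC β (hΓsub hβ)) (hbΓ α hα).1
      (lt_of_le_of_lt (hbΓ α hα).2 (Cardinal.lift_lt.2 hδE.2))
      (fun β hβ => hδα.trans_le (hprog α hα β hβ)) hδ
      ((inter_subset_inter_right _ (Iio_subset_Iio hδα.le)).trans (hcov₀ α hα))

theorem statement0
    (κ : Cardinal.{0}) (hκreg : κ.IsRegular) (hκunc : Cardinal.aleph0 < κ)
    (C : Ordinal.{0} → Set Ordinal.{0}) (hC : IsCSeq κ.ord C)
    (χ : Cardinal.{0}) (hχ : χ < supReg κ)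
    (A Δ' Γ : Set Ordinal.{0})
    (hA : A ⊆ Iio κ.ord) (hAcard : MkEq A κ)
    (hΔ'sub : Δ' ⊆ Iio κ.ord) (hΔ'card : MkEq Δ' κ)
    (hΓsub : Γ ⊆ Iio κ.ord) (hΓcard : MkEq Γ κ)
    (b' : Ordinal.{0} → Set Ordinal.{0})
    (hb' : ∀ α ∈ A, b' α ⊆ Γ ∧ MkLe (b' α) χ)
    (hcov : ∀ α ∈ A, Δ' ∩ Iio α ⊆ ⋃ β ∈ b' α, C β)
    (Sta : Set Ordinal.{0})
    (hStaSub : Sta ⊆ {α | α < κ.ord ∧ χ < α.cof})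
    (hStaStat : IsStationaryIn Sta κ.ord) :
    ∃ (Δ₀ Δ₁ : Set Ordinal.{0}) (b : Ordinal.{0} → Set Ordinal.{0}),
      Δ₀ ⊆ Iio κ.ord ∧ MkEq Δ₀ κ ∧
      Δ₁ ⊆ Iio κ.ord ∧ MkEq Δ₁ κ ∧
      (∀ α < κ.ord, b α ⊆ Γ ∧ MkLe (b α) χ) ∧
      (∀ α < κ.ord, ∀ β ∈ b α, α ≤ β) ∧
      Δ₀ ⊆ Δ' ∧
      accPlus Δ₁ ∩ {α | α < κ.ord ∧ χ < α.cof} ⊆ Δ₁ ∧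
      (∀ α < κ.ord, Δ₀ ∩ Iio α ⊆ ⋃ β ∈ b α, C β) ∧
      (∀ α < κ.ord, Δ₁ ∩ Iio α ⊆ ⋃ β ∈ b α, acc (C β)) ∧
      IsStationaryIn {α ∈ Sta | ∀ β ∈ b α, sSup (C β ∩ Iio α) = α} κ.ord :=
  statement0_general κ hκreg hκunc C hC χ A Δ' Γ hA hAcard hΔ'sub hΔ'card hΓsub b' hb' hcov Sta
    hStaSub hStaStat

end CSeq
end
end

section
/- For every infinite cardinal λ, the C-sequence number of λ⁺ satisfies cf(λ) ≤ χ(λ⁺) ≤ λ. In particular, if λ is regular, then χ(λ⁺) = λ. -/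
noncomputable section

open Set

namespace CSeq

/-!
Upper bound: a closed `C_{γ+1} ⊆ γ + 1` with supremum `γ` contains `γ` (for `γ > 0`), so the
nonzero ordinals below `α` are covered by the sets `C_{γ+1}`, `γ < max(α, λ)`, which are `λ` many.

Lower bound: take every `C_β` to be the closure of a fundamental sequence of `β`, so that for
`β < λ⁺` every proper initial segment of `C_β` has size `< λ`. Given `Δ ∈ [λ⁺]^{λ⁺}`, there are `λ`
consecutive blocks of `Δ`, each of size `λ`, below some `α ∈ Δ`. If `|b(α)| < cf λ`, each block
meets some `C_β`, `β ∈ b(α)`, in `λ` points, and such a `β` serves a single block: a point of `C_β`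
in a later block would have `λ` predecessors in `C_β`. Hence `|b(α)| ≥ λ > |b(α)|`.
-/

open Cardinal Ordinal Order

theorem IsCSeqOn.mem_apply_succ {Γ : Set Ordinal.{0}} {C : Ordinal.{0} → Set Ordinal.{0}}
    (hC : IsCSeqOn Γ C) {x : Ordinal.{0}} (hx : succ x ∈ Γ) (hx0 : x ≠ 0) : x ∈ C (succ x) := by
  obtain ⟨hsub, hclosed, hsup⟩ := hC _ hx
  by_contra hxC
  have hlt : C (succ x) ⊆ Iio x := fun c hc =>
    (lt_succ_iff.mp (mem_Iio.mp (hsub hc))).lt_of_ne (by rintro rfl; exact hxC hc)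
  refine hxC (hclosed x (lt_succ x) (pos_iff_ne_zero.mpr hx0) ?_)
  rw [inter_eq_self_of_subset_left hlt, hsup, Iio_succ, csSup_Iic]

theorem cseqCovers_succ {lam : Cardinal.{0}} (hlam : ℵ₀ ≤ lam) {C : Ordinal.{0} → Set Ordinal.{0}}
    (hC : IsCSeq (succ lam).ord C) : CSeqCovers (succ lam) (Iio (succ lam).ord) C lam := by
  have hκ : IsSuccLimit (succ lam).ord := isSuccLimit_ord (hlam.trans (le_succ lam))
  have hlamκ : lam.ord < (succ lam).ord := ord_lt_ord.mpr (lt_succ lam)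
  refine ⟨succ '' Iio (succ lam).ord, fun α => succ '' Iio (max α lam.ord), ?_, ?_, ?_, ?_⟩
  · rintro _ ⟨x, hx, rfl⟩
    exact hκ.succ_lt hx
  · rw [MkEq, mk_image_eq succ_injective, Cardinal.mk_Iio_ordinal, card_ord]
  · intro α hα
    have hmax : max α lam.ord < (succ lam).ord := max_lt hα hlamκ
    refine ⟨?_, ?_⟩
    · rintro _ ⟨x, hx, rfl⟩
      exact hκ.succ_lt (hx.trans hmax)
    · rw [MkEq, mk_image_eq succ_injective, Cardinal.mk_Iio_ordinal, Cardinal.lift_inj]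
      refine le_antisymm (lt_succ_iff.mp (lt_ord.mp hmax)) ?_
      simpa using card_le_card (le_max_right α lam.ord)
  · rintro α - _ ⟨⟨x, hx, rfl⟩, hxα⟩
    exact mem_biUnion (x := succ (succ x)) ⟨succ x, mem_Iio.mpr (lt_max_of_lt_left hxα), rfl⟩
      (hC.mem_apply_succ (hκ.succ_lt (hκ.succ_lt hx)) (succ_ne_bot x))

def closureBelow (S : Set Ordinal.{0}) (β : Ordinal.{0}) : Set Ordinal.{0} :=
  S ∪ {α | α < β ∧ 0 < α ∧ sSup (S ∩ Iio α) = α}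

section closureBelow

variable {S : Set Ordinal.{0}} {β : Ordinal.{0}}

theorem sSup_closureBelow_inter_Iio (α : Ordinal.{0}) :
    sSup (closureBelow S β ∩ Iio α) = sSup (S ∩ Iio α) := by
  have hbdd : BddAbove (S ∩ Iio α) := bddAbove_Iio.mono inter_subset_right
  refine le_antisymm (csSup_le' ?_) (csSup_le_csSup' (bddAbove_Iio.mono inter_subset_right)
    (inter_subset_inter_left _ subset_union_left))
  rintro x ⟨hxS | ⟨-, -, hx⟩, hxα⟩
  · exact le_csSup hbdd ⟨hxS, hxα⟩
  · rw [← hx]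
    exact csSup_le_csSup' hbdd (inter_subset_inter_right _ (Iio_subset_Iio hxα.le))

theorem isClosedIn_closureBelow : IsClosedIn (closureBelow S β) β :=
  fun α hαβ hα hsup => Or.inr ⟨hαβ, hα, by rwa [sSup_closureBelow_inter_Iio] at hsup⟩

theorem closureBelow_subset_Iio (hS : S ⊆ Iio β) : closureBelow S β ⊆ Iio β :=
  union_subset hS fun _ hα => hα.1

theorem sSup_closureBelow (hS : S ⊆ Iio β) (hcof : ∀ x < β, ∃ s ∈ S, x ≤ s) :
    sSup (closureBelow S β) = sSup (Iio β) :=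
  csSup_eq_csSup_of_forall_exists_le (fun x hx => ⟨x, closureBelow_subset_Iio hS hx, le_rfl⟩)
    fun y hy => (hcof y hy).imp fun _ ⟨hs, hys⟩ => ⟨Or.inl hs, hys⟩

theorem exists_mem_Icc_of_mem_closureBelow {z : Ordinal.{0}} (hz : z ∈ closureBelow S β)
    {a : Ordinal.{0}} (ha : a < z) : ∃ s ∈ S, a ≤ s ∧ s ≤ z := by
  rcases hz with hzS | ⟨-, -, hz⟩
  · exact ⟨z, hzS, ha.le, le_rfl⟩
  · rw [← hz] at ha
    obtain ⟨s, ⟨hsS, hsz⟩, has⟩ := exists_lt_of_lt_csSup (nonempty_iff_ne_empty.mpr fun h => by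
      simp [h] at ha) ha
    exact ⟨s, hsS, has.le, hsz.le⟩

/-- The limit points `a < z` of `S` inject into `S ∩ Iic z` by sending `a` to the least element of
`S` above it. -/
theorem mk_closureBelow_inter_Iio_le {z : Ordinal.{0}} (hz : z ∈ closureBelow S β) :
    #↥(closureBelow S β ∩ Iio z) ≤ #↥(S ∩ Iio z) + #↥(S ∩ Iic z) := by
  set A := {α | α < β ∧ 0 < α ∧ sSup (S ∩ Iio α) = α}
  let g : Ordinal.{0} → Ordinal.{0} := fun a => sInf {s | s ∈ S ∧ a ≤ s}
  have hg : ∀ a < z, (g a ∈ S ∧ a ≤ g a) ∧ g a ≤ z := fun a ha => by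
    obtain ⟨s, hs, has, hsz⟩ := exists_mem_Icc_of_mem_closureBelow hz ha
    exact ⟨csInf_mem (s := {s | s ∈ S ∧ a ≤ s}) ⟨s, hs, has⟩,
      (csInf_le' (s := {s | s ∈ S ∧ a ≤ s}) ⟨hs, has⟩).trans hsz⟩
  have hmono : StrictMonoOn g (A ∩ Iio z) := by
    rintro a ⟨-, ha⟩ b ⟨⟨-, -, hb⟩, hbz⟩ hab
    rw [← hb] at hab
    obtain ⟨s, ⟨hsS, hsb⟩, has⟩ := exists_lt_of_lt_csSup (nonempty_iff_ne_empty.mpr fun h => by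
      simp [h] at hab) hab
    calc g a ≤ s := csInf_le' ⟨hsS, has.le⟩
      _ < b := hsb
      _ ≤ g b := (hg b hbz).1.2
  have hA : #↥(A ∩ Iio z) ≤ #↥(S ∩ Iic z) := by
    rw [← mk_image_eq_of_injOn g _ hmono.injOn]
    refine mk_le_mk_of_subset ?_
    rintro _ ⟨a, ⟨-, ha⟩, rfl⟩
    exact ⟨(hg a ha).1.1, (hg a ha).2⟩
  calc #↥(closureBelow S β ∩ Iio z) = #↥((S ∩ Iio z) ∪ (A ∩ Iio z)) := by
        rw [closureBelow, union_inter_distrib_right]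
    _ ≤ #↥(S ∩ Iio z) + #↥(A ∩ Iio z) := mk_union_le _ _
    _ ≤ #↥(S ∩ Iio z) + #↥(S ∩ Iic z) := add_le_add_right hA _

end closureBelow

def fundamentalRange (β : Ordinal.{0}) : Set Ordinal.{0} :=
  range fun i => ((exists_isFundamentalSeq (o := β) rfl).choose i : Ordinal.{0})

section fundamentalRange

variable {β : Ordinal.{0}}

theorem fundamentalRange_subset_Iio : fundamentalRange β ⊆ Iio β := by
  rintro _ ⟨i, rfl⟩
  exact Subtype.prop _

theorem exists_mem_fundamentalRange_le {x : Ordinal.{0}} (hx : x < β) :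
    ∃ s ∈ fundamentalRange β, x ≤ s := by
  obtain ⟨_, ⟨i, rfl⟩, hi⟩ := (exists_isFundamentalSeq (o := β) rfl).choose_spec.isCofinal_range
    ⟨x, hx⟩
  exact ⟨_, ⟨i, rfl⟩, hi⟩

theorem mk_fundamentalRange_inter_Iio_lt {z : Ordinal.{0}} (hz : z < β) :
    #↥(fundamentalRange β ∩ Iio z) < lift.{1} β.cof := by
  set f := (exists_isFundamentalSeq (o := β) rfl).choose
  have hf := (exists_isFundamentalSeq (o := β) rfl).choose_spec
  obtain ⟨_, ⟨j, rfl⟩, hj⟩ := hf.isCofinal_range ⟨z, hz⟩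
  have hsub : fundamentalRange β ∩ Iio z ⊆
      range fun i : Iio j.1 => (f ⟨i, mem_Iio.mpr (i.2.trans j.2)⟩ : Ordinal) := by
    rintro _ ⟨⟨i, rfl⟩, hiz⟩
    have hij : i < j := hf.strictMono.lt_iff_lt.mp (lt_of_lt_of_le hiz hj)
    exact ⟨⟨i, hij⟩, rfl⟩
  calc #↥(fundamentalRange β ∩ Iio z) ≤ #(Iio j.1) :=
        (mk_le_mk_of_subset hsub).trans mk_range_le
    _ = lift.{1} j.1.card := Cardinal.mk_Iio_ordinal _
    _ < lift.{1} β.cof := lift_lt.mpr (lt_ord.mp j.2)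

end fundamentalRange

def fundamentalClub (β : Ordinal.{0}) : Set Ordinal.{0} :=
  closureBelow (fundamentalRange β) β

theorem isCSeqOn_fundamentalClub (Γ : Set Ordinal.{0}) : IsCSeqOn Γ fundamentalClub :=
  fun _ _ => ⟨closureBelow_subset_Iio fundamentalRange_subset_Iio, isClosedIn_closureBelow,
    sSup_closureBelow fundamentalRange_subset_Iio fun _ => exists_mem_fundamentalRange_le⟩

theorem mk_fundamentalClub_inter_Iio_lt {lam : Cardinal.{0}} (hlam : ℵ₀ ≤ lam)
    {β : Ordinal.{0}} (hβ : β.cof ≤ lam) {z : Ordinal.{0}} (hz : z ∈ fundamentalClub β) :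
    #↥(fundamentalClub β ∩ Iio z) < lift.{1} lam := by
  have hlam' : ℵ₀ ≤ lift.{1} lam := aleph0_le_lift.mpr hlam
  have hIio : #↥(fundamentalRange β ∩ Iio z) < lift.{1} lam :=
    (mk_fundamentalRange_inter_Iio_lt
      (closureBelow_subset_Iio fundamentalRange_subset_Iio hz)).trans_le (lift_le.mpr hβ)
  have hIic : #↥(fundamentalRange β ∩ Iic z) < lift.{1} lam := by
    have hsub : fundamentalRange β ∩ Iic z ⊆ (fundamentalRange β ∩ Iio z) ∪ {z} := by
      rintro x ⟨hxS, hxz⟩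
      rcases (mem_Iic.mp hxz).lt_or_eq with hxz | rfl
      exacts [Or.inl ⟨hxS, hxz⟩, Or.inr rfl]
    calc #↥(fundamentalRange β ∩ Iic z)
        ≤ #↥(fundamentalRange β ∩ Iio z) + #({z} : Set Ordinal) :=
          (mk_le_mk_of_subset hsub).trans (mk_union_le _ _)
      _ < lift.{1} lam := add_lt_of_lt hlam' hIio (by
          rw [mk_singleton]; exact one_lt_aleph0.trans_le hlam')
  exact (mk_closureBelow_inter_Iio_le hz).trans_lt (add_lt_of_lt hlam' hIio hIic)

theorem exists_strictMono_mem {Δ : Set Ordinal.{0}} (hΔ : BddAbove Δ) {o : Ordinal.{0}}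
    (ho : lift.{1} o.card < #↥Δ) :
    ∃ e : Ordinal.{0} → Ordinal.{0}, StrictMono e ∧ ∀ j < o, e j ∈ Δ := by
  obtain ⟨B, hB⟩ := hΔ
  have hunb : ¬ BddAbove (Δ ∪ Ioi B) := by
    rintro ⟨c, hc⟩
    exact (lt_succ (max B c)).not_ge
      ((le_max_right B c).trans' (hc (Or.inr ((le_max_left B c).trans_lt (lt_succ _)))))
  refine ⟨enumOrd (Δ ∪ Ioi B), enumOrd_strictMono hunb, fun j hj => ?_⟩
  refine (enumOrd_mem hunb j).resolve_right fun hBj => ho.not_ge ?_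
  have hsub : Δ ⊆ enumOrd (Δ ∪ Ioi B) '' Iio j := by
    intro d hd
    obtain ⟨i, hi⟩ : d ∈ range (enumOrd (Δ ∪ Ioi B)) := by
      rw [range_enumOrd hunb]; exact Or.inl hd
    refine ⟨i, (enumOrd_strictMono hunb).lt_iff_lt.mp ?_, hi⟩
    rw [hi]; exact (hB hd).trans_lt hBj
  calc #↥Δ ≤ #(Iio j) := (mk_le_mk_of_subset hsub).trans mk_image_le
    _ = lift.{1} j.card := Cardinal.mk_Iio_ordinal j
    _ ≤ lift.{1} o.card := lift_le.mpr (card_le_card hj.le)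

theorem mul_add_lt_mul {a i ξ η : Ordinal.{0}} (hi : i < a) (hξη : ξ < η) : a * ξ + i < a * η :=
  calc a * ξ + i < a * ξ + a := add_lt_add_right hi _
    _ = a * succ ξ := (mul_succ a ξ).symm
    _ ≤ a * η := mul_le_mul_right (succ_le_of_lt hξη) _

/-- The block `T ξ` consists of the elements of `Δ` of index `λ ⬝ ξ + i`, `i < λ`. -/
theorem exists_blocks {lam : Cardinal.{0}} (hlam : ℵ₀ ≤ lam) {Δ : Set Ordinal.{0}}
    (hΔ : BddAbove Δ) (hcard : lift.{1} lam < #↥Δ) :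
    ∃ α ∈ Δ, ∃ T : Ordinal.{0} → Set Ordinal.{0}, ∀ ξ < lam.ord,
      T ξ ⊆ Δ ∩ Iio α ∧ #↥(T ξ) = lift.{1} lam ∧ ∀ η < ξ, ∀ x ∈ T η, ∀ y ∈ T ξ, x < y := by
  set a := lam.ord
  obtain ⟨e, he, heΔ⟩ := exists_strictMono_mem hΔ (o := a * a + 1) (by
    simpa [a, Cardinal.mul_eq_self hlam, Cardinal.add_one_of_aleph0_le hlam] using hcard)
  refine ⟨e (a * a), heΔ _ (lt_add_one _), fun ξ => (fun i => e (a * ξ + i)) '' Iio a,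
    fun ξ hξ => ⟨?_, ?_, ?_⟩⟩
  · rintro _ ⟨i, hi, rfl⟩
    have hlt := mul_add_lt_mul hi hξ
    exact ⟨heΔ _ (hlt.trans (lt_add_one _)), he hlt⟩
  · have hinj : Function.Injective fun i => e (a * ξ + i) :=
      (he.comp add_right_strictMono).injective
    rw [mk_image_eq hinj, Cardinal.mk_Iio_ordinal, card_ord]
  · rintro η hη _ ⟨i, hi, rfl⟩ _ ⟨k, -, rfl⟩
    exact he ((mul_add_lt_mul hi hη).trans_le le_self_add)

theorem exists_lift_le_mk_inter {lam χ : Cardinal.{0}} (hlam : ℵ₀ ≤ lam) (hχ : χ < lam.ord.cof)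
    {T B : Set Ordinal.{0}} {D : Ordinal.{0} → Set Ordinal.{0}} (hT : T ⊆ ⋃ β ∈ B, D β)
    (hB : #↥B ≤ lift.{1} χ) (hTcard : #↥T = lift.{1} lam) :
    ∃ β ∈ B, lift.{1} lam ≤ #↥(D β ∩ T) := by
  have hcover : ∀ x : T, ∃ β : B, x.1 ∈ D β := fun x => by
    obtain ⟨β, hβ, hx⟩ := mem_iUnion₂.mp (hT x.2)
    exact ⟨⟨β, hβ⟩, hx⟩
  choose f hf using hcover
  have hBcof : #↥B < (lift.{1} lam).ord.cof := by
    rw [← lift_ord, ← lift_cof]; exact hB.trans_lt (lift_lt.mpr hχ)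
  obtain ⟨β, t, ht, hlam_t, hft⟩ :=
    infinite_pigeonhole_set f _ hTcard.ge (aleph0_le_lift.mpr hlam) hBcof
  exact ⟨β, β.2, hlam_t.trans (mk_le_mk_of_subset fun x hx => ⟨hft hx ▸ hf ⟨x, ht hx⟩, ht hx⟩)⟩

theorem cof_le_of_cseqCovers {lam κ χ : Cardinal.{0}} (hlam : ℵ₀ ≤ lam) (hlamκ : lam < κ)
    {Γ : Set Ordinal.{0}} {C : Ordinal.{0} → Set Ordinal.{0}}
    (hthin : ∀ β ∈ Γ, ∀ z ∈ C β, #↥(C β ∩ Iio z) < lift.{1} lam) (hcov : CSeqCovers κ Γ C χ) :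
    lam.ord.cof ≤ χ := by
  by_contra! hχ
  obtain ⟨Δ, b, hΔ, hΔcard, hb, hcover⟩ := hcov
  obtain ⟨α, hαΔ, T, hT⟩ := exists_blocks hlam (bddAbove_Iio.mono hΔ)
    (by rw [hΔcard]; exact lift_lt.mpr hlamκ)
  obtain ⟨hbΓ, hbcard⟩ := hb α (hΔ hαΔ)
  have hpiece : ∀ ξ < lam.ord, ∃ β ∈ b α, lift.{1} lam ≤ #↥(C β ∩ T ξ) := fun ξ hξ =>
    exists_lift_le_mk_inter hlam hχ ((hT ξ hξ).1.trans (hcover α (hΔ hαΔ))) hbcard.le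
      (hT ξ hξ).2.1
  choose! F hFb hFlarge using hpiece
  have hF_ne : ∀ η < lam.ord, ∀ ξ < η, F ξ ≠ F η := by
    intro η hη ξ hξη hFeq
    obtain ⟨z, hzC, hzT⟩ : (C (F η) ∩ T η).Nonempty := nonempty_coe_sort.mp <| mk_ne_zero_iff.mp
      (aleph0_pos.trans_le ((aleph0_le_lift.mpr hlam).trans (hFlarge η hη))).ne'
    refine (hthin _ (hbΓ (hFb η hη)) z hzC).not_ge ?_
    calc lift.{1} lam ≤ #↥(C (F ξ) ∩ T ξ) := hFlarge ξ (hξη.trans hη)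
      _ ≤ #↥(C (F η) ∩ Iio z) := mk_le_mk_of_subset fun x hx =>
          ⟨hFeq ▸ hx.1, (hT η hη).2.2 ξ hξη x hx.2 z hzT⟩
  have hinj : InjOn F (Iio lam.ord) := by
    intro ξ hξ η hη hFeq
    rcases lt_trichotomy ξ η with hlt | heq | hgt
    exacts [absurd hFeq (hF_ne η hη ξ hlt), heq, absurd hFeq.symm (hF_ne ξ hξ η hgt)]
  have hle : lift.{1} lam ≤ lift.{1} χ := by
    calc lift.{1} lam = #↥(F '' Iio lam.ord) := by
          rw [mk_image_eq_of_injOn _ _ hinj, Cardinal.mk_Iio_ordinal, card_ord]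
      _ ≤ #↥(b α) := mk_le_mk_of_subset (image_subset_iff.mpr fun ξ hξ => hFb ξ hξ)
      _ = lift.{1} χ := hbcard
  exact ((lift_le.mp hle).trans_lt hχ).not_ge (cof_ord_le lam)

theorem statement2 (lam : Cardinal.{0}) (hlam : Cardinal.aleph0 ≤ lam) :
    lam.ord.cof ≤ chiNum (Order.succ lam) ∧ chiNum (Order.succ lam) ≤ lam ∧
      (lam.IsRegular → chiNum (Order.succ lam) = lam) := by
  have hmem : lam ∈ {χ | χ ≤ succ lam ∧ ∀ C, IsCSeq (succ lam).ord C →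
      CSeqCovers (succ lam) (Iio (succ lam).ord) C χ} :=
    ⟨le_succ lam, fun _ hC => cseqCovers_succ hlam hC⟩
  have hub : chiNum (succ lam) ≤ lam := csInf_le' hmem
  have hthin : ∀ β ∈ Iio (succ lam).ord, ∀ z ∈ fundamentalClub β,
      #↥(fundamentalClub β ∩ Iio z) < lift.{1} lam := fun β hβ _ hz =>
    mk_fundamentalClub_inter_Iio_lt hlam
      ((cof_le_card β).trans (lt_succ_iff.mp (lt_ord.mp hβ))) hz
  have hlb : lam.ord.cof ≤ chiNum (succ lam) := le_csInf ⟨lam, hmem⟩ fun χ hχ =>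
    cof_le_of_cseqCovers hlam (lt_succ lam) hthin (hχ.2 _ (isCSeqOn_fundamentalClub _))
  exact ⟨hlb, hub, fun hreg => hub.antisymm (hreg.cof_ord.ge.trans hlb)⟩

end CSeq
end
end

section
/- Let κ be a regular uncountable cardinal and suppose that for every C-sequence ⟨C_β : β < κ⟩ over κ there exist Δ ∈ [κ]^κ and b : κ → κ such that Δ ∩ α ⊆ C_{b(α)} for all α < κ (i.e., χ(κ) ≤ 1). Then for every sequence ⟨S_i : i < κ⟩ of stationary subsets of κ there exists a weakly inaccessible cardinal β < κ such that S_i ∩ β is stationary in β for all i < β. -/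
/-!
Suppose no weakly inaccessible `β < κ` reflects all `S i`, `i < β`. Build a C-sequence whose
`C β` is: a club of `β` above some `i < β` and disjoint from `S i` if `β` is weakly inaccessible;
`[ν, β)` if `β = ν⁺`; a club of `β` above `cf β` carrying a strictly increasing map into `cf β` if
`β` is singular; `{β - 1}` or `∅` if `β` is not a limit. Let `Δ, b` cover it and let `A` be the
club of accumulation points of `Δ`, with least point `m`. For every `α ∈ A`, `A ∩ α ⊆ C (b α)`
and `α ≤ b α`. Once `α` is large, `A ∩ α` has two points, meets every `S j` with `j < m`, and
contains the first `m + 1` points of `A`, which rules out every shape of `C (b α)` except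
`b α = |m|⁺`, and that one is excluded because `b α ≥ α > |m|⁺`.
-/

noncomputable section

open Set

namespace CSeq

open Order

theorem _root_.StrictMonoOn.le_apply_of_le {α : Type*} [LinearOrder α] [WellFoundedLT α]
    {f : α → α} {m : α} (hf : StrictMonoOn f (Iic m)) {t : α} (htm : t ≤ m) : t ≤ f t := by
  induction t using WellFoundedLT.induction with
  | _ t ih =>
    by_contra! h
    have hfm : f t ≤ m := h.le.trans htm
    exact (ih (f t) h hfm).not_gt (hf hfm htm h)

/-- `accPlus` without the bound `α < ssup a`. -/
def accPts (s : Set Ordinal.{0}) : Set Ordinal.{0} := {γ | 0 < γ ∧ sSup (s ∩ Iio γ) = γ}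

section AccPts

variable {s t C : Set Ordinal.{0}} {α β γ : Ordinal.{0}}

theorem mem_accPts_iff : γ ∈ accPts s ↔ 0 < γ ∧ ∀ y < γ, ∃ z ∈ s, y < z ∧ z < γ := by
  refine and_congr_right fun hγ => ⟨fun h y hy => ?_, fun h => ?_⟩
  · obtain ⟨z, hz, hyz⟩ := exists_lt_of_lt_csSup' (h.symm ▸ hy : y < sSup (s ∩ Iio γ))
    exact ⟨z, hz.1, hyz, hz.2⟩
  · obtain ⟨z, hz, -, hzγ⟩ := h 0 hγ
    exact csSup_eq_of_forall_le_of_forall_lt_exists_gt ⟨z, hz, hzγ⟩ (fun z hz => le_of_lt hz.2)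
      fun y hy => (h y hy).imp fun z hz => ⟨⟨hz.1, hz.2.2⟩, hz.2.1⟩

theorem mem_accPts_of_inter_Iio_subset (hγ : γ ∈ accPts s) (hst : s ∩ Iio γ ⊆ t) :
    γ ∈ accPts t := by
  rw [mem_accPts_iff] at hγ ⊢
  refine ⟨hγ.1, fun y hy => ?_⟩
  obtain ⟨z, hz, hyz, hzγ⟩ := hγ.2 y hy
  exact ⟨z, hst ⟨hz, hzγ⟩, hyz, hzγ⟩

theorem accPts_accPts_subset : accPts (accPts s) ⊆ accPts s := by
  intro γ hγ
  rw [mem_accPts_iff] at hγ ⊢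
  refine ⟨hγ.1, fun y hy => ?_⟩
  obtain ⟨z, hz, hyz, hzγ⟩ := hγ.2 y hy
  obtain ⟨w, hw, hzw, hwγ⟩ := (mem_accPts_iff.1 hz).2 y hyz
  exact ⟨w, hw, hzw, hwγ.trans hzγ⟩

theorem IsClosedIn.mem (hC : IsClosedIn C β) (hγβ : γ < β) (hγ : γ ∈ accPts C) : γ ∈ C :=
  hC γ hγβ hγ.1 hγ.2

theorem IsClubIn.sSup_eq (hC : IsClubIn C β) : sSup C = sSup (Iio β) := by
  have hbdd : BddAbove C := ⟨β, fun x hx => le_of_lt (hC.1 hx)⟩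
  refine le_antisymm (csSup_le_csSup' ⟨β, fun x hx => le_of_lt hx⟩ hC.1) (csSup_le' ?_)
  intro y hy
  obtain ⟨x, hx, hyx⟩ := hC.2.1 y hy
  exact hyx.trans (le_csSup hbdd hx)

theorem IsClubIn.inter_Ioi (hC : IsClubIn C β) (hβ : IsSuccLimit β) (hγβ : γ < β) :
    IsClubIn (C ∩ Ioi γ) β := by
  refine ⟨fun x hx => hC.1 hx.1, fun y hy => ?_, fun α hαβ hα hsup => ?_⟩
  · obtain ⟨x, hx, hyx⟩ := hC.2.1 _ (max_lt hy (hβ.succ_lt hγβ))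
    exact ⟨x, ⟨hx, (lt_succ γ).trans_le (le_of_max_le_right hyx)⟩, le_of_max_le_left hyx⟩
  · obtain ⟨z, hz, -, hzα⟩ := (mem_accPts_iff.1 ⟨hα, hsup⟩).2 0 hα
    exact ⟨hC.2.2.mem hαβ (mem_accPts_of_inter_Iio_subset ⟨hα, hsup⟩ fun x hx => hx.1.1),
      hz.2.trans hzα⟩

theorem isClubIn_Ico {a : Ordinal.{0}} (haβ : a < β) :
    IsClubIn (Ico a β) β := by
  refine ⟨fun x hx => hx.2, fun y hy => ⟨max y a, ⟨le_max_right _ _, max_lt hy haβ⟩,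
    le_max_left _ _⟩, fun α hαβ hα hsup => ?_⟩
  obtain ⟨z, hz, -, hzα⟩ := (mem_accPts_iff.1 ⟨hα, hsup⟩).2 0 hα
  exact ⟨hz.1.trans hzα.le, hαβ⟩

theorem isClubIn_succ_preimage (hβ : ¬ IsSuccLimit β) : IsClubIn (succ ⁻¹' {β}) β := by
  refine ⟨fun x (hx : succ x = β) => hx ▸ lt_succ x, fun y hy => ?_, fun α hαβ hα hsup => ?_⟩
  · obtain ⟨x, rfl⟩ : β ∈ range succ := by
      rcases Ordinal.zero_or_succ_or_isSuccLimit β with rfl | h | h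
      · exact absurd hy (not_lt_bot (a := y))
      · exact h
      · exact absurd h hβ
    exact ⟨x, rfl, lt_succ_iff.1 hy⟩
  · obtain ⟨z, hz, -, hzα⟩ := (mem_accPts_iff.1 ⟨hα, hsup⟩).2 0 hα
    exact absurd (hz.symm ▸ succ_le_of_lt hzα : β ≤ α) (not_le.2 hαβ)

theorem le_of_mem_accPts (hα : α ∈ accPts C) (hC : C ⊆ Iio β) : α ≤ β := by
  by_contra! hβα
  obtain ⟨z, hz, hβz, -⟩ := (mem_accPts_iff.1 hα).2 β hβα
  exact (hC hz).not_gt hβz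

theorem accPts_inter_Iio_subset (hC : IsClosedIn C β) (hαβ : α ≤ β) (hsC : s ∩ Iio α ⊆ C) :
    accPts s ∩ Iio α ⊆ C :=
  fun _ hγ => hC.mem (hγ.2.trans_le hαβ)
    (mem_accPts_of_inter_Iio_subset hγ.1 fun _ hx => hsC ⟨hx.1, mem_Iio.2 (lt_trans hx.2 hγ.2)⟩)

end AccPts

section Singular

variable {β ξ : Ordinal.{0}}

theorem isClubIn_setOf_forall_lt {q : Ordinal.{0} → Ordinal.{0}} (hβ : IsSuccLimit β)
    (hξβ : ξ < β) (hq : MonotoneOn q (Iio β)) (hq_unbounded : ∀ x < β, ∃ y < β, q x < q y) :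
    IsClubIn {x | ξ < x ∧ x < β ∧ ∀ y < x, q y < q x} β := by
  refine ⟨fun x hx => hx.2.1, fun γ hγ => ?_, fun α hαβ hα hsup => ?_⟩
  · set γ' := max γ (succ ξ)
    have hγ'β : γ' < β := max_lt hγ (hβ.succ_lt hξβ)
    obtain ⟨y, hyβ, hy⟩ := hq_unbounded γ' hγ'β
    set T := {z | z < β ∧ q γ' < q z}
    obtain ⟨hxβ, hx⟩ : sInf T ∈ T := csInf_mem ⟨y, hyβ, hy⟩
    set x := sInf T
    have hγ'x : γ' < x := lt_of_not_ge fun h => (hq (h.trans_lt hγ'β) hγ'β h).not_gt hx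
    refine ⟨x, ⟨(lt_succ ξ).trans_le ((le_max_right _ _).trans hγ'x.le), hxβ, fun z hz => ?_⟩,
      (le_max_left _ _).trans hγ'x.le⟩
    have : z ∉ T := fun h => (csInf_le' h).not_gt hz
    exact (not_lt.1 fun h => this ⟨hz.trans hxβ, h⟩).trans_lt hx
  · have hacc := (mem_accPts_iff.1 ⟨hα, hsup⟩).2
    obtain ⟨z, hz, -, hzα⟩ := hacc 0 hα
    refine ⟨hz.1.trans hzα, hαβ, fun y hy => ?_⟩
    obtain ⟨x, hx, hyx, hxα⟩ := hacc y hy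
    exact (hx.2.2 y hyx).trans_le (hq hx.2.1 hαβ hxα.le)

theorem exists_isClubIn_strictMonoOn_lt_cof (hβ : IsSuccLimit β) (hsing : β.cof.ord < β) :
    ∃ (C : Set Ordinal.{0}) (q : Ordinal.{0} → Ordinal.{0}), IsClubIn C β ∧ StrictMonoOn q C ∧
      ∀ x ∈ C, q x < β.cof.ord ∧ β.cof.ord < x := by
  obtain ⟨f, hf⟩ := Ordinal.exists_isFundamentalSeq (o := β) rfl
  set q : Ordinal.{0} → Ordinal.{0} := fun x => sInf {i | ∃ h : i < β.cof.ord, x ≤ f ⟨i, h⟩}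
  have hq_mem : ∀ x < β, ∃ h : q x < β.cof.ord, x ≤ f ⟨q x, h⟩ := fun x hx => by
    obtain ⟨_, ⟨i, rfl⟩, hi⟩ := hf.isCofinal_range ⟨x, hx⟩
    exact csInf_mem (s := {i | ∃ h : i < β.cof.ord, x ≤ f ⟨i, h⟩}) ⟨i, i.2, hi⟩
  have hq_mono : MonotoneOn q (Iio β) := fun x _ y hy hxy => by
    obtain ⟨h, hle⟩ := hq_mem y hy
    exact csInf_le' ⟨h, hxy.trans hle⟩
  have hq_unbounded : ∀ x < β, ∃ y < β, q x < q y := fun x hx => by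
    obtain ⟨h, -⟩ := hq_mem x hx
    set y := succ (f ⟨q x, h⟩ : Ordinal.{0})
    have hyβ : y < β := hβ.succ_lt (f _).2
    refine ⟨y, hyβ, lt_of_not_ge fun hle => ?_⟩
    obtain ⟨h', hy⟩ := hq_mem y hyβ
    exact (lt_succ _).not_ge (hy.trans (hf.strictMono.monotone (Subtype.mk_le_mk.2 hle)))
  refine ⟨_, q, isClubIn_setOf_forall_lt hβ hsing hq_mono hq_unbounded,
    fun x hx y hy hxy => hy.2.2 x hxy, fun x hx => ⟨(hq_mem x hx.2.1).1, hx.1⟩⟩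

theorem exists_eq_ord_succ_of_ord_cof_eq (hβ : IsSuccLimit β) (hreg : β.cof.ord = β)
    (hinacc : ¬ ∃ μ : Cardinal.{0}, μ.ord = β ∧ IsWInaccessible μ) :
    ∃ ν : Cardinal.{0}, β = (succ ν).ord := by
  have hμ : β.cof.IsRegular := Cardinal.isRegular_cof hβ
  have hlim : ¬ IsSuccLimit β.cof := fun hlim => hinacc ⟨_, hreg, hμ, hlim⟩
  rw [Cardinal.isSuccLimit_iff, not_and_or, not_not] at hlim
  obtain ⟨ν, hν⟩ := mem_range_succ_of_not_isSuccPrelimit (hlim.resolve_left hμ.ne_zero)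
  exact ⟨ν, by rw [hν, hreg]⟩

end Singular

section Regular

open Cardinal

variable {κ : Cardinal.{0}}

theorem exists_forall_le_of_lt_ord (hκ : κ.IsRegular) {m : Ordinal.{0}} (hm : m < κ.ord)
    {f : Ordinal.{0} → Ordinal.{0}} (hf : ∀ j < m, f j < κ.ord) :
    ∃ γ < κ.ord, ∀ j < m, f j ≤ γ := by
  have hsmall : #(f '' Iio m) < (Ordinal.lift.{1} κ.ord).cof := by
    calc #(f '' Iio m) ≤ #(Iio m) := mk_image_le
      _ = lift m.card := mk_Iio_ordinal m
      _ < lift κ := lift_lt.2 (lt_ord.1 hm)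
      _ = (Ordinal.lift.{1} κ.ord).cof := by rw [← Ordinal.lift_cof, hκ.cof_ord]
  refine ⟨sSup (f '' Iio m), Ordinal.sSup_lt_of_lt_cof hsmall ?_,
    fun j hj => le_csSup ?_ ⟨j, hj, rfl⟩⟩
  · rintro _ ⟨j, hj, rfl⟩
    exact hf j hj
  · exact ⟨κ.ord, by rintro _ ⟨j, hj, rfl⟩; exact (hf j hj).le⟩

theorem exists_mem_gt_of_mkEq (hκ : ℵ₀ ≤ κ) {Δ : Set Ordinal.{0}} (hΔκ : MkEq Δ κ)
    {γ : Ordinal.{0}} (hγ : γ < κ.ord) : ∃ x ∈ Δ, γ < x := by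
  by_contra! h
  have hle : #Δ ≤ #(Iio (succ γ)) := mk_le_mk_of_subset fun x hx => lt_succ_iff.2 (h x hx)
  rw [mk_Iio_ordinal, show #Δ = lift κ from hΔκ, lift_le] at hle
  exact (lt_ord.1 ((isSuccLimit_ord hκ).succ_lt hγ)).not_ge hle

theorem exists_mem_accPts_gt (hκ : κ.IsRegular) (hκω : ℵ₀ < κ) {Δ : Set Ordinal.{0}}
    (hΔ : Δ ⊆ Iio κ.ord) (hΔunb : ∀ γ < κ.ord, ∃ x ∈ Δ, γ < x) {γ : Ordinal.{0}}
    (hγ : γ < κ.ord) : ∃ α ∈ accPts Δ, γ < α ∧ α < κ.ord := by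
  choose! next hnextΔ hnext using hΔunb
  have hnextκ : ∀ δ < κ.ord, next δ < κ.ord := fun δ hδ => hΔ (hnextΔ δ hδ)
  have hακ : Ordinal.nfp next γ < κ.ord :=
    Ordinal.nfp_lt_ord (by rwa [hκ.cof_ord]) hnextκ hγ
  have hit : ∀ n, next^[n] γ < κ.ord := fun n => (Ordinal.iterate_le_nfp next γ n).trans_lt hακ
  have hγα : γ < Ordinal.nfp next γ := (hnext γ hγ).trans_le (Ordinal.iterate_le_nfp next γ 1)
  refine ⟨_, mem_accPts_iff.2 ⟨zero_le.trans_lt hγα, fun y hy => ?_⟩, hγα, hακ⟩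
  obtain ⟨n, hn⟩ := Ordinal.lt_nfp_iff.1 hy
  refine ⟨next^[n + 1] γ, ?_, hn.trans ?_, ?_⟩
  · rw [Function.iterate_succ_apply']
    exact hnextΔ _ (hit n)
  · rw [Function.iterate_succ_apply']
    exact hnext _ (hit n)
  · calc next^[n + 1] γ < next^[n + 2] γ := by
          rw [Function.iterate_succ_apply' _ (n + 1)]
          exact hnext _ (hit (n + 1))
      _ ≤ Ordinal.nfp next γ := Ordinal.iterate_le_nfp next γ _

theorem isClubIn_accPts_inter_Iio (hκ : κ.IsRegular) (hκω : ℵ₀ < κ) {Δ : Set Ordinal.{0}}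
    (hΔ : Δ ⊆ Iio κ.ord) (hΔκ : MkEq Δ κ) : IsClubIn (accPts Δ ∩ Iio κ.ord) κ.ord := by
  refine ⟨fun x hx => hx.2, fun γ hγ => ?_, fun α hακ hα hsup => ⟨?_, hακ⟩⟩
  · obtain ⟨α, hαΔ, hγα, hακ⟩ := exists_mem_accPts_gt hκ hκω hΔ
      (fun _ => exists_mem_gt_of_mkEq hκ.aleph0_le hΔκ) hγ
    exact ⟨α, ⟨hαΔ, hακ⟩, hγα.le⟩
  · exact accPts_accPts_subset (mem_accPts_of_inter_Iio_subset ⟨hα, hsup⟩ fun x hx => hx.1.1)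

theorem not_bddAbove_union_Ici (A : Set Ordinal.{0}) (a : Ordinal.{0}) :
    ¬ BddAbove (A ∪ Ici a) :=
  not_bddAbove_iff.2 fun x =>
    ⟨max (succ x) a, Or.inr (mem_Ici.2 (le_max_right _ _)), (lt_succ x).trans_le (le_max_left _ _)⟩

theorem enumOrd_union_Ici_ord_mem (hκ : κ.IsRegular) {A : Set Ordinal.{0}}
    (hA : A ⊆ Iio κ.ord) (hAunb : ∀ γ < κ.ord, ∃ x ∈ A, γ ≤ x) {t : Ordinal.{0}}
    (ht : t < κ.ord) : Ordinal.enumOrd (A ∪ Ici κ.ord) t ∈ A := by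
  induction t using WellFoundedLT.induction with
  | _ t ih =>
    obtain ⟨γ, hγκ, hγ⟩ := exists_forall_le_of_lt_ord hκ ht
      (f := Ordinal.enumOrd (A ∪ Ici κ.ord)) fun b hb => hA (ih b hb (hb.trans ht))
    obtain ⟨a, haA, hγa⟩ := hAunb (succ γ) ((isSuccLimit_ord hκ.aleph0_le).succ_lt hγκ)
    have hle : Ordinal.enumOrd (A ∪ Ici κ.ord) t ≤ a := Ordinal.enumOrd_le_of_forall_lt
      (Or.inl haA) fun b hb => (hγ b hb).trans_lt ((lt_succ γ).trans_le hγa)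
    exact (Ordinal.enumOrd_mem (not_bddAbove_union_Ici A κ.ord) t).resolve_right
      fun h => (hle.trans_lt (hA haA)).not_ge h

end Regular

/-- The shapes of `C β` in the C-sequence built from a failure of reflection: at non-limit
`β` a subsingleton, at weakly inaccessible `β` a club avoiding some `S i`, at `β = ν⁺` the
interval `[ν, β)`, and at singular `β` a club with a strictly increasing map into `cf β`, all of
whose points lie above `cf β`. -/
inductive Narrow (S : Ordinal.{0} → Set Ordinal.{0}) (β : Ordinal.{0}) (C : Set Ordinal.{0}) :
    Prop
  | subsingleton : C.Subsingleton → Narrow S β C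
  | avoids (i : Ordinal.{0}) : (∀ x ∈ C, i < x ∧ x ∉ S i) → Narrow S β C
  | eq_ord_succ (ν : Cardinal.{0}) : β = (succ ν).ord → C ⊆ Ici ν.ord → Narrow S β C
  | strictMonoOn (ξ : Ordinal.{0}) (q : Ordinal.{0} → Ordinal.{0}) :
      StrictMonoOn q C → (∀ x ∈ C, q x < ξ ∧ ξ < x) → Narrow S β C

theorem exists_isClubIn_narrow {S : Ordinal.{0} → Set Ordinal.{0}} {β : Ordinal.{0}}
    (hβ : (∃ μ : Cardinal.{0}, μ.ord = β ∧ IsWInaccessible μ) →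
      ∃ i < β, ¬ IsStationaryIn (S i ∩ Iio β) β) :
    ∃ C, IsClubIn C β ∧ Narrow S β C := by
  by_cases hlim : IsSuccLimit β
  swap
  · exact ⟨_, isClubIn_succ_preimage hlim,
      .subsingleton fun x hx y hy => succ_injective (hx.trans hy.symm)⟩
  rcases (Ordinal.ord_cof_le β).lt_or_eq with hsing | hreg
  · obtain ⟨C, q, hC, hq, hqC⟩ := exists_isClubIn_strictMonoOn_lt_cof hlim hsing
    exact ⟨C, hC, .strictMonoOn _ q hq hqC⟩
  by_cases hinacc : ∃ μ : Cardinal.{0}, μ.ord = β ∧ IsWInaccessible μ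
  · obtain ⟨i, hiβ, hi⟩ := hβ hinacc
    obtain ⟨C, hC, hCS⟩ : ∃ C, IsClubIn C β ∧ ¬ (S i ∩ Iio β ∩ C).Nonempty := by
      simpa [IsStationaryIn] using hi
    exact ⟨C ∩ Ioi i, hC.inter_Ioi hlim hiβ,
      .avoids i fun x hx => ⟨hx.2, fun hxS => hCS ⟨x, ⟨hxS, hC.1 hx.1⟩, hx.1⟩⟩⟩
  · obtain ⟨ν, rfl⟩ := exists_eq_ord_succ_of_ord_cof_eq hlim hreg hinacc
    exact ⟨_, isClubIn_Ico (Cardinal.ord_lt_ord.2 (lt_succ ν)),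
      .eq_ord_succ ν rfl fun x hx => hx.1⟩

theorem not_narrow {S : Ordinal.{0} → Set Ordinal.{0}} {β m : Ordinal.{0}} {C : Set Ordinal.{0}}
    {e : Ordinal.{0} → Ordinal.{0}} (hm : 0 < m) (he : StrictMonoOn e (Iic m))
    (heC : ∀ t ≤ m, e t ∈ C) (hmC : m ∈ C) (hCβ : C ⊆ Iio β) (hS : ∀ j < m, (S j ∩ C).Nonempty)
    (hβ : β ≠ (succ m.card).ord) : ¬ Narrow S β C := by
  rintro (hC | ⟨i, hi⟩ | ⟨ν, rfl, hν⟩ | ⟨ξ, q, hq, hqξ⟩)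
  · exact (he (mem_Iic.2 zero_le) (mem_Iic.2 le_rfl) hm).ne (hC (heC 0 zero_le) (heC m le_rfl))
  · obtain ⟨x, hxS, hxC⟩ := hS i (hi m hmC).1
    exact (hi x hxC).2 hxS
  · have hcard : m.card = ν :=
      le_antisymm (lt_succ_iff.1 (Cardinal.lt_ord.1 (hCβ hmC))) (Cardinal.ord_le.1 (hν hmC))
    exact hβ (by rw [hcard])
  · have hqe : StrictMonoOn (q ∘ e) (Iic m) := hq.comp he fun t ht => heC t ht
    exact ((hqe.le_apply_of_le le_rfl).trans_lt
      ((hqξ _ (heC m le_rfl)).1.trans (hqξ m hmC).2)).false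

theorem not_exists_cover_of_narrow {κ : Cardinal.{0}} (hκ : κ.IsRegular)
    (hκω : Cardinal.aleph0 < κ)
    {S : Ordinal.{0} → Set Ordinal.{0}} (hS : ∀ i < κ.ord, IsStationaryIn (S i) κ.ord)
    {C : Ordinal.{0} → Set Ordinal.{0}} (hC : ∀ β < κ.ord, IsClubIn (C β) β ∧ Narrow S β (C β)) :
    ¬ ∃ (Δ : Set Ordinal.{0}) (b : Ordinal.{0} → Ordinal.{0}),
      Δ ⊆ Iio κ.ord ∧ MkEq Δ κ ∧ (∀ α < κ.ord, b α < κ.ord) ∧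
        ∀ α < κ.ord, Δ ∩ Iio α ⊆ C (b α) := by
  rintro ⟨Δ, b, hΔ, hΔκ, hb, hcov⟩
  set A := accPts Δ ∩ Iio κ.ord
  have hA : IsClubIn A κ.ord := isClubIn_accPts_inter_Iio hκ hκω hΔ hΔκ
  obtain ⟨a, ha, -⟩ := hA.2.1 0 hκ.ord_pos
  set m := sInf A
  have hmA : m ∈ A := csInf_mem ⟨a, ha⟩
  set e := Ordinal.enumOrd (A ∪ Ici κ.ord)
  have he : StrictMono e := Ordinal.enumOrd_strictMono (not_bddAbove_union_Ici A κ.ord)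
  have heA : ∀ t < κ.ord, e t ∈ A := fun t ht => enumOrd_union_Ici_ord_mem hκ hA.1 hA.2.1 ht
  choose! x hxS hxA using fun j (hj : j < m) => hS j (hj.trans hmA.2) A hA
  obtain ⟨γ, hγκ, hxγ⟩ := exists_forall_le_of_lt_ord hκ hmA.2 fun j hj => (hxA j hj).2
  obtain ⟨δ, hδκ, hsucc⟩ : ∃ δ < κ.ord, (succ m.card).ord < κ.ord → (succ m.card).ord ≤ δ := by
    by_cases h : (succ m.card).ord < κ.ord
    · exact ⟨_, h, fun _ => le_rfl⟩
    · exact ⟨0, hκ.ord_pos, fun h' => absurd h' h⟩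
  set η := max (max (e m) γ) δ
  obtain ⟨α, hαA, hηα⟩ : ∃ α ∈ A, η < α := by
    obtain ⟨α, hαA, hα⟩ := hA.2.1 (succ η) ((Cardinal.isSuccLimit_ord hκ.aleph0_le).succ_lt
      (max_lt (max_lt (heA m hmA.2).2 hγκ) hδκ))
    exact ⟨α, hαA, (lt_succ η).trans_le hα⟩
  have hemα : e m < α := ((le_max_left _ _).trans (le_max_left _ _)).trans_lt hηα
  have hbκ := hb α hαA.2
  have hCb := (hC (b α) hbκ).1
  have hαb : α ≤ b α :=
    le_of_mem_accPts (mem_accPts_of_inter_Iio_subset hαA.1 (hcov α hαA.2)) hCb.1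
  have hAC : A ∩ Iio α ⊆ C (b α) := fun y hy =>
    accPts_inter_Iio_subset hCb.2.2 hαb (hcov α hαA.2) ⟨hy.1.1, hy.2⟩
  have heC : ∀ t ≤ m, e t ∈ C (b α) := fun t ht =>
    hAC ⟨heA t (ht.trans_lt hmA.2), (he.monotone ht).trans_lt hemα⟩
  refine not_narrow hmA.1.1 (he.strictMonoOn _) heC (hAC ⟨hmA, he.le_apply.trans_lt hemα⟩) hCb.1
    (fun j hj => ⟨x j, hxS j hj, hAC ⟨hxA j hj, (hxγ j hj).trans_lt
      (((le_max_right _ _).trans (le_max_left _ _)).trans_lt hηα)⟩⟩) (fun h => ?_)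
    (hC (b α) hbκ).2
  exact ((hsucc (h ▸ hbκ)).trans_lt (((le_max_right _ _).trans_lt hηα).trans_le hαb)).ne h.symm

theorem statement6
    (κ : Cardinal.{0}) (hκreg : κ.IsRegular) (hκunc : Cardinal.aleph0 < κ)
    (h : ∀ C, IsCSeq κ.ord C →
      ∃ (Δ : Set Ordinal.{0}) (b : Ordinal.{0} → Ordinal.{0}),
        Δ ⊆ Iio κ.ord ∧ MkEq Δ κ ∧ (∀ α < κ.ord, b α < κ.ord) ∧
        ∀ α < κ.ord, Δ ∩ Iio α ⊆ C (b α))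
    (S : Ordinal.{0} → Set Ordinal.{0})
    (hS : ∀ i < κ.ord, IsStationaryIn (S i) κ.ord) :
    ∃ β < κ.ord, (∃ μ : Cardinal.{0}, μ.ord = β ∧ IsWInaccessible μ) ∧
      ∀ i < β, IsStationaryIn (S i ∩ Iio β) β := by
  by_contra! hfail
  choose! C hC using fun β (hβ : β < κ.ord) => exists_isClubIn_narrow (S := S) (hfail β hβ)
  have hCseq : IsCSeq κ.ord C := fun β hβ =>
    ⟨(hC β hβ).1.1, (hC β hβ).1.2.2, (hC β hβ).1.sSup_eq⟩
  exact not_exists_cover_of_narrow hκreg hκunc hS hC (h C hCseq)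

end CSeq
end
end

section
/- Let λ be an uncountable cardinal, let κ := λ⁺, and let δ be an uncountable cardinal. If there exists a δ-complete uniform ultrafilter over κ, then there exists a δ-complete uniform weakly normal ultrafilter over acc(κ), the set of nonzero limit ordinals below κ. -/
noncomputable section

open Set

namespace CSeq

/-!
Since `U` is countably complete, its ultrapower is well-founded, so among the functions into `κ`
that are unbounded modulo `U` there is a `U`-least one, `f`. By minimality every function below
`f` modulo `U` is bounded modulo `U`. Applied to `g ∘ f` for a regressive `g` this is the weak
normality of the pushforward `f_* U`; applied to the predecessor of `f` it shows that `f` takes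
limit values `U`-almost everywhere, so `f_* U` is an ultrafilter over `acc(κ)`. Completeness
passes to pushforwards, and every member of `f_* U` is unbounded in the regular cardinal `κ`,
hence of size `κ`.
-/

section UltrafilterPushforward

open Cardinal Order

variable {X Y : Set Ordinal.{0}} {U : Set (Set Ordinal.{0})} {κ : Ordinal.{0}}
  {f : Ordinal.{0} → Ordinal.{0}}

namespace IsUltrafilterOn

theorem nonempty_of_mem (hU : IsUltrafilterOn X U) {A : Set Ordinal.{0}} (hA : A ∈ U) :
    A.Nonempty :=
  nonempty_iff_ne_empty.2 fun h => hU.empty_notMem (h ▸ hA)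

theorem sep_mem_of_forall (hU : IsUltrafilterOn X U) {A : Set Ordinal.{0}} (hA : A ∈ U)
    {p : Ordinal.{0} → Prop} (hp : ∀ β ∈ A, p β) : {β ∈ X | p β} ∈ U :=
  hU.mem_of_superset A hA _ (sep_subset _ _) fun β hβ => ⟨hU.mem_subset A hA hβ, hp β hβ⟩

theorem sep_not_mem_iff_sep_notMem (hU : IsUltrafilterOn X U) {p : Ordinal.{0} → Prop} :
    {β ∈ X | ¬ p β} ∈ U ↔ {β ∈ X | p β} ∉ U := by
  refine ⟨fun hn hp => ?_, fun hp => ?_⟩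
  · obtain ⟨β, ⟨-, hnβ⟩, -, hpβ⟩ := hU.nonempty_of_mem (hU.inter_mem _ hn _ hp)
    exact hnβ hpβ
  · have hcompl := (hU.mem_or_compl_mem _ (sep_subset X p)).resolve_left hp
    exact hU.sep_mem_of_forall hcompl fun β ⟨hβ, hnβ⟩ hpβ => hnβ ⟨hβ, hpβ⟩

theorem mem_of_mk_diff_lt (hU : IsUltrafilterOn X U) (hUu : IsUniform X U)
    {A : Set Ordinal.{0}} (hA : A ⊆ X) (hsmall : #(X \ A : Set Ordinal.{0}) < #X) : A ∈ U :=
  (hU.mem_or_compl_mem A hA).resolve_right fun hc => hsmall.ne (hUu _ hc)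

end IsUltrafilterOn

theorem IsComplete.iInter_nat_mem {δ : Cardinal.{0}} (hc : IsComplete δ X U) (hδ : ℵ₀ < δ)
    {A : ℕ → Set Ordinal.{0}} (hA : ∀ n, A n ∈ U) : X ∩ ⋂ n, A n ∈ U := by
  rw [← sInter_range]
  refine hc _ (range_subset_iff.2 hA) ?_
  calc #(range A) ≤ lift.{1} #ℕ := by simpa only [lift_uzero] using mk_range_le_lift (f := A)
    _ < lift.{1} δ := by simpa using hδ

def LtMod (X : Set Ordinal.{0}) (U : Set (Set Ordinal.{0})) (g f : Ordinal.{0} → Ordinal.{0}) :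
    Prop :=
  {β ∈ X | g β < f β} ∈ U

theorem wellFounded_ltMod (hU : IsUltrafilterOn X U) {δ : Cardinal.{0}} (hc : IsComplete δ X U)
    (hδ : ℵ₀ < δ) : WellFounded (LtMod X U) := by
  refine wellFounded_iff_isEmpty_descending_chain.2 ⟨fun ⟨f, hf⟩ => ?_⟩
  obtain ⟨β, -, hβ⟩ := hU.nonempty_of_mem (hc.iInter_nat_mem hδ hf)
  obtain ⟨n, hn⟩ := WellFounded.not_rel_apply_succ (r := (· < ·)) fun n => f n β
  exact hn (mem_iInter.1 hβ n).2

def IsUnboundedMod (κ : Ordinal.{0}) (X : Set Ordinal.{0}) (U : Set (Set Ordinal.{0}))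
    (f : Ordinal.{0} → Ordinal.{0}) : Prop :=
  (∀ β ∈ X, f β < κ) ∧ ∀ γ < κ, {β ∈ X | γ < f β} ∈ U

def IsMinimalUnboundedMod (κ : Ordinal.{0}) (X : Set Ordinal.{0}) (U : Set (Set Ordinal.{0}))
    (f : Ordinal.{0} → Ordinal.{0}) : Prop :=
  IsUnboundedMod κ X U f ∧ ∀ g, IsUnboundedMod κ X U g → ¬ LtMod X U g f

theorem isUnboundedMod_id {c : Cardinal.{0}} (hc : ℵ₀ ≤ c) (hU : IsUltrafilterOn (Iio c.ord) U)
    (hUu : IsUniform (Iio c.ord) U) : IsUnboundedMod c.ord (Iio c.ord) U id := by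
  refine ⟨fun β hβ => hβ, fun γ hγ => hU.mem_of_mk_diff_lt hUu (sep_subset _ _) ?_⟩
  have hsub : Iio c.ord \ {β ∈ Iio c.ord | γ < id β} ⊆ Iio (γ + 1) :=
    fun β ⟨hβ, hnβ⟩ => Order.lt_add_one_iff.2 (not_lt.1 fun h => hnβ ⟨hβ, h⟩)
  refine (mk_le_mk_of_subset hsub).trans_lt ?_
  rw [mk_Iio_ordinal, mk_Iio_ordinal, card_ord, lift_lt, ← lt_ord]
  exact (isSuccLimit_ord hc).add_one_lt hγ

theorem exists_isMinimalUnboundedMod (hwf : WellFounded (LtMod X U))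
    (hf : IsUnboundedMod κ X U f) : ∃ f, IsMinimalUnboundedMod κ X U f :=
  let ⟨g, hg, hmin⟩ := hwf.has_min _ ⟨f, hf⟩
  ⟨g, hg, hmin⟩

def mapOn (X Y : Set Ordinal.{0}) (f : Ordinal.{0} → Ordinal.{0}) (U : Set (Set Ordinal.{0})) :
    Set (Set Ordinal.{0}) :=
  {A | A ⊆ Y ∧ {β ∈ X | f β ∈ A} ∈ U}

theorem IsUltrafilterOn.mapOn (hU : IsUltrafilterOn X U) (hY : {β ∈ X | f β ∈ Y} ∈ U) :
    IsUltrafilterOn Y (mapOn X Y f U) where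
  mem_subset _ hA := hA.1
  univ_mem := ⟨subset_rfl, hY⟩
  empty_notMem h := hU.empty_notMem (by simpa using h.2)
  mem_of_superset _ hA _ hB hAB := ⟨hB, hU.sep_mem_of_forall hA.2 fun _ hβ => hAB hβ.2⟩
  inter_mem A hA B hB := ⟨inter_subset_left.trans hA.1,
    hU.sep_mem_of_forall (hU.inter_mem _ hA.2 _ hB.2) fun _ ⟨⟨_, hβA⟩, _, hβB⟩ => ⟨hβA, hβB⟩⟩
  mem_or_compl_mem A hA := by
    refine (hU.mem_or_compl_mem _ (sep_subset X _)).imp (fun h => ⟨hA, h⟩) fun h => ?_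
    refine ⟨sdiff_subset, hU.sep_mem_of_forall (hU.inter_mem _ hY _ h) ?_⟩
    rintro β ⟨⟨hβ, hβY⟩, -, hβA⟩
    exact ⟨hβY, fun h => hβA ⟨hβ, h⟩⟩

theorem IsComplete.mapOn {δ : Cardinal.{0}} (hU : IsUltrafilterOn X U) (hc : IsComplete δ X U)
    (hY : {β ∈ X | f β ∈ Y} ∈ U) : IsComplete δ Y (mapOn X Y f U) := by
  intro s hs hsδ
  have hpre : X ∩ ⋂₀ ((fun A => {β ∈ X | f β ∈ A}) '' s) ∈ U :=
    hc _ (image_subset_iff.2 fun A hA => (hs hA).2) (mk_image_le.trans_lt hsδ)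
  refine ⟨inter_subset_left, hU.sep_mem_of_forall (hU.inter_mem _ hY _ hpre) ?_⟩
  rintro β ⟨⟨-, hβY⟩, -, hβs⟩
  exact ⟨hβY, fun A hA => (hβs _ (mem_image_of_mem _ hA)).2⟩

theorem lift_le_mk_of_forall_exists_lt {c : Cardinal.{0}} (hc : c.IsRegular) {A : Set Ordinal.{0}}
    (hA : A ⊆ Iio c.ord) (hcofinal : ∀ γ < c.ord, ∃ α ∈ A, γ < α) : lift.{1} c ≤ #A := by
  have hcof : IsCofinal (Subtype.val ⁻¹' A : Set (Iio c.ord)) := fun γ =>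
    let ⟨α, hαA, hγα⟩ := hcofinal γ γ.2
    ⟨⟨α, hA hαA⟩, hαA, hγα.le⟩
  calc lift.{1} c = Order.cof (Iio c.ord) := by
        rw [Ordinal.cof_Iio, ← Ordinal.lift_cof, hc.cof_ord]
    _ ≤ #(Subtype.val ⁻¹' A : Set (Iio c.ord)) := Order.cof_le hcof
    _ ≤ #A := mk_preimage_of_injective _ _ Subtype.val_injective

theorem IsUnboundedMod.exists_mem_lt (hU : IsUltrafilterOn X U) (hf : IsUnboundedMod κ X U f)
    {A : Set Ordinal.{0}} (hA : {β ∈ X | f β ∈ A} ∈ U) {γ : Ordinal.{0}} (hγ : γ < κ) :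
    ∃ α ∈ A, γ < α :=
  let ⟨β, ⟨_, hβA⟩, _, hγβ⟩ := hU.nonempty_of_mem (hU.inter_mem _ hA _ (hf.2 γ hγ))
  ⟨f β, hβA, hγβ⟩

theorem IsUnboundedMod.isUniform_mapOn {c : Cardinal.{0}} (hc : c.IsRegular)
    (hU : IsUltrafilterOn X U) (hf : IsUnboundedMod c.ord X U f) (hY : Y ⊆ Iio c.ord) :
    IsUniform Y (mapOn X Y f U) := by
  intro A hA
  refine le_antisymm (mk_le_mk_of_subset hA.1) ?_
  calc #Y ≤ #(Iio c.ord) := mk_le_mk_of_subset hY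
    _ = lift.{1} c := by rw [mk_Iio_ordinal, card_ord]
    _ ≤ #A := lift_le_mk_of_forall_exists_lt hc (hA.1.trans hY) fun _ hγ =>
      hf.exists_mem_lt hU hA.2 hγ

namespace IsMinimalUnboundedMod

theorem exists_sep_le_mem (hU : IsUltrafilterOn X U) (hf : IsMinimalUnboundedMod κ X U f)
    {g : Ordinal.{0} → Ordinal.{0}} (hg : LtMod X U g f) :
    ∃ γ < κ, {β ∈ X | g β ≤ γ} ∈ U := by
  by_contra! hunb
  -- otherwise `min g f` would be an unbounded function below `f`
  refine hf.2 (fun β => min (g β) (f β))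
    ⟨fun β hβ => (min_le_right _ _).trans_lt (hf.1.1 β hβ), fun γ hγ => ?_⟩
    (hU.sep_mem_of_forall hg fun β ⟨_, h⟩ => (min_le_left _ _).trans_lt h)
  have hgt := hU.sep_not_mem_iff_sep_notMem.2 (hunb γ hγ)
  refine hU.sep_mem_of_forall (hU.inter_mem _ hgt _ (hf.1.2 γ hγ)) ?_
  rintro β ⟨⟨-, hgβ⟩, -, hfβ⟩
  exact lt_min (not_le.1 hgβ) hfβ

theorem sep_isSuccLimit_mem (hU : IsUltrafilterOn X U) (hf : IsMinimalUnboundedMod κ X U f)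
    (hκ : IsSuccLimit κ) : {β ∈ X | IsSuccLimit (f β)} ∈ U := by
  by_contra hlim
  have hpred : LtMod X U (fun β => Ordinal.pred (f β)) f := by
    have hsucc := hU.sep_not_mem_iff_sep_notMem.2 hlim
    refine hU.sep_mem_of_forall (hU.inter_mem _ hsucc _ (hf.1.2 0 hκ.pos)) ?_
    rintro β ⟨⟨-, hnlim⟩, -, hpos⟩
    exact Ordinal.pred_lt_iff_not_isSuccPrelimit.2 fun h =>
      hnlim (Ordinal.isSuccLimit_iff.2 ⟨hpos.ne', h⟩)
  obtain ⟨γ, hγ, hle⟩ := hf.exists_sep_le_mem hU hpred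
  obtain ⟨β, ⟨-, hβle⟩, -, hβgt⟩ :=
    hU.nonempty_of_mem (hU.inter_mem _ hle _ (hf.1.2 _ (hκ.succ_lt hγ)))
  exact not_lt_of_ge (Ordinal.pred_le_iff_le_succ.1 hβle) hβgt

theorem isWeaklyNormal_mapOn (hU : IsUltrafilterOn X U) (hf : IsMinimalUnboundedMod κ X U f)
    (hκ : IsSuccLimit κ) (Y : Set Ordinal.{0}) :
    IsWeaklyNormal κ Y (mapOn X Y f U) := by
  intro A hA g hg
  obtain ⟨γ, hγ, hle⟩ := hf.exists_sep_le_mem hU (g := fun β => g (f β))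
    (hU.sep_mem_of_forall hA.2 fun β hβ => hg _ hβ.2)
  refine ⟨γ + 1, hκ.add_one_lt hγ, (sep_subset _ _).trans hA.1,
    hU.sep_mem_of_forall (hU.inter_mem _ hA.2 _ hle) ?_⟩
  rintro β ⟨⟨-, hβA⟩, -, hβγ⟩
  exact ⟨hβA, Order.lt_add_one_iff.2 hβγ⟩

end IsMinimalUnboundedMod

end UltrafilterPushforward

theorem statement7
    (lam : Cardinal.{0}) (hlam : Cardinal.aleph0 < lam)
    (δ : Cardinal.{0}) (hδ : Cardinal.aleph0 < δ)
    (U : Set (Set Ordinal.{0}))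
    (hU : IsUltrafilterOn (Iio (Order.succ lam).ord) U)
    (hUcomplete : IsComplete δ (Iio (Order.succ lam).ord) U)
    (hUuniform : IsUniform (Iio (Order.succ lam).ord) U) :
    ∃ D : Set (Set Ordinal.{0}),
      IsUltrafilterOn (accOrd (Order.succ lam).ord) D ∧
      IsComplete δ (accOrd (Order.succ lam).ord) D ∧
      IsUniform (accOrd (Order.succ lam).ord) D ∧
      IsWeaklyNormal (Order.succ lam).ord (accOrd (Order.succ lam).ord) D := by
  have hreg : (Order.succ lam).IsRegular := Cardinal.isRegular_succ hlam.le
  have hκ : Order.IsSuccLimit (Order.succ lam).ord := Cardinal.isSuccLimit_ord hreg.aleph0_le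
  obtain ⟨f, hf⟩ := exists_isMinimalUnboundedMod (wellFounded_ltMod hU hUcomplete hδ)
    (isUnboundedMod_id hreg.aleph0_le hU hUuniform)
  have hacc : {β ∈ Iio (Order.succ lam).ord | f β ∈ accOrd (Order.succ lam).ord} ∈ U :=
    hU.sep_mem_of_forall (hf.sep_isSuccLimit_mem hU hκ) fun β ⟨hβ, hlim⟩ => ⟨hf.1.1 β hβ, hlim⟩
  exact ⟨mapOn _ _ f U, hU.mapOn hacc, hUcomplete.mapOn hU hacc,
    hf.1.isUniform_mapOn hreg hU fun β hβ => hβ.1, hf.isWeaklyNormal_mapOn hU hκ _⟩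

end CSeq
end
end
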